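/- arXiv:2407.15504 — 4 statements merged into one kernel-verified Lean document; each statement's English description precedes it below -/
import Mathlib

section
/- Let R ∈ ℝ satisfy R ≥ Σ_{x∈𝒳} min_{m∈ℳ_x} R_x(m). Then the primal LP value equals the dual value: V(R) = sup_{λ ≥ 0} ( −λR + Σ_{x∈𝒳} min_{m∈ℳ_x} (D_x(m) + λ R_x(m)) ), i.e., V(R) = sup_{λ ≥ 0} g(λ). -/
/-!
Weak duality is the fact that a minimum lies below every average. For strong duality, map each
stochastic family `z` to its point (rate, distortion) in the plane. These points form a compact
convex set `T`, and a level `V` below the primal value puts `(R, V)` outside the closed convex set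
`T + [0, ∞)²`. A line separating them has a normal with nonnegative coordinates (it must stay
below a translated quadrant) and is not vertical (some family meets the rate). Its slope is a
multiplier `λ ≥ 0` with `V < D(z) + λ (R(z) - R)` for every `z`. At a deterministic family attaining
the inner minima, the right-hand side is exactly `g(λ)`.
-/

open Finset
open scoped Pointwise

lemma nonneg_of_forall_lt_add_mul {u a b : ℝ} (h : ∀ t : ℝ, 0 ≤ t → u < a + t * b) : 0 ≤ b := by
  by_contra! hb
  have key := h ((a - u) / -b) (div_nonneg (by linarith [h 0 le_rfl]) (by linarith))
  rw [div_mul_eq_mul_div, div_neg, mul_div_cancel_right₀ _ hb.ne] at key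
  linarith

lemma exists_lagrange_multiplier {T : Set (ℝ × ℝ)} (hT : IsCompact T) (hTconv : Convex ℝ T)
    {R V : ℝ} {p₀ : ℝ × ℝ} (hp₀ : p₀ ∈ T) (hp₀R : p₀.1 ≤ R)
    (hV : ∀ p ∈ T, p.1 ≤ R → V < p.2) :
    ∃ l : ℝ, 0 ≤ l ∧ ∀ p ∈ T, V < p.2 + l * (p.1 - R) := by
  set K := T + Set.Ici (0 : ℝ × ℝ)
  have hTK : T ⊆ K := Set.subset_add_left T Set.self_mem_Ici
  have hRV : (R, V) ∉ K := by
    rintro ⟨p, hp, q, hq, hpq⟩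
    obtain ⟨hq₁, hq₂⟩ : 0 ≤ q.1 ∧ 0 ≤ q.2 := hq
    obtain ⟨hpq₁, hpq₂⟩ : p.1 + q.1 = R ∧ p.2 + q.2 = V := Prod.ext_iff.mp hpq
    linarith [hV p hp (by linarith)]
  obtain ⟨f, u, hfRV, hfK⟩ := geometric_hahn_banach_point_closed
    (hTconv.add (convex_Ici 0)) (isClosed_Ici.add_left_of_isCompact hT) hRV
  have hf : ∀ p : ℝ × ℝ, f p = p.1 * f (1, 0) + p.2 * f (0, 1) := fun p => by
    rw [← smul_eq_mul, ← smul_eq_mul, ← map_smul, ← map_smul, ← map_add]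
    simp
  have hf_nonneg : ∀ q : ℝ × ℝ, 0 ≤ q → 0 ≤ f q := fun q hq =>
    nonneg_of_forall_lt_add_mul fun t ht => by
      simpa using hfK _ (Set.add_mem_add hp₀ (smul_nonneg ht hq : 0 ≤ t • q))
  have hα : 0 ≤ f (1, 0) := hf_nonneg _ (by simp [Prod.le_def])
  have hβ : 0 < f (0, 1) := by
    refine (hf_nonneg _ (by simp [Prod.le_def])).lt_of_ne fun hβ₀ => ?_
    have hup := hfK p₀ (hTK hp₀)
    rw [hf, ← hβ₀] at hup hfRV
    nlinarith
  refine ⟨f (1, 0) / f (0, 1), div_nonneg hα hβ.le, fun p hp => ?_⟩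
  have hup := hfK p (hTK hp)
  rw [hf] at hup hfRV
  rw [← sub_pos, ← mul_pos_iff_of_pos_right hβ]
  field_simp
  linarith

lemma inf'_le_sum_mul_of_mem_stdSimplex {ι : Type*} [Fintype ι] [Nonempty ι] (f : ι → ℝ)
    {w : ι → ℝ} (hw : w ∈ stdSimplex ℝ ι) : univ.inf' univ_nonempty f ≤ ∑ i, f i * w i :=
  calc univ.inf' univ_nonempty f = ∑ i, univ.inf' univ_nonempty f * w i := by
        rw [← mul_sum, hw.2, mul_one]
    _ ≤ ∑ i, f i * w i := sum_le_sum fun i _ =>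
        mul_le_mul_of_nonneg_right (inf'_le f (mem_univ i)) (hw.1 i)

section StochasticFamily

variable {X : Type*} {M : X → Type*} [∀ x, Fintype (M x)]

variable (M) in
def stochasticFamilies : Set ((x : X) → M x → ℝ) := Set.univ.pi fun x => stdSimplex ℝ (M x)

lemma mem_stochasticFamilies {z : (x : X) → M x → ℝ} :
    z ∈ stochasticFamilies M ↔ (∀ x m, 0 ≤ z x m) ∧ ∀ x, ∑ m, z x m = 1 :=
  Set.mem_univ_pi.trans forall_and

lemma isCompact_stochasticFamilies : IsCompact (stochasticFamilies M) :=
  isCompact_univ_pi fun x => isCompact_stdSimplex ℝ (M x)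

lemma convex_stochasticFamilies : Convex ℝ (stochasticFamilies M) :=
  convex_pi fun x _ => convex_stdSimplex ℝ (M x)

variable [Fintype X]

def totalCost (c : (x : X) → M x → ℝ) : ((x : X) → M x → ℝ) →ₗ[ℝ] ℝ where
  toFun z := ∑ x, ∑ m, c x m * z x m
  map_add' z w := by simp only [Pi.add_apply, mul_add, sum_add_distrib]
  map_smul' a z := by simp only [Pi.smul_apply, smul_eq_mul, mul_sum, RingHom.id_apply, mul_left_comm]

lemma totalCost_apply (c z : (x : X) → M x → ℝ) : totalCost c z = ∑ x, ∑ m, c x m * z x m := rfl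

lemma totalCost_add_mul (c d z : (x : X) → M x → ℝ) (l : ℝ) :
    totalCost (fun x m => c x m + l * d x m) z = totalCost c z + l * totalCost d z := by
  simp only [totalCost_apply, add_mul, sum_add_distrib, mul_sum, mul_assoc]

variable [∀ x, Nonempty (M x)]

lemma sum_inf'_le_totalCost (c : (x : X) → M x → ℝ) {z : (x : X) → M x → ℝ}
    (hz : z ∈ stochasticFamilies M) : ∑ x, univ.inf' univ_nonempty (c x) ≤ totalCost c z :=
  sum_le_sum fun x _ => inf'_le_sum_mul_of_mem_stdSimplex (c x) (hz x (Set.mem_univ x))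

lemma exists_totalCost_eq_sum_inf' (c : (x : X) → M x → ℝ) :
    ∃ z ∈ stochasticFamilies M, totalCost c z = ∑ x, univ.inf' univ_nonempty (c x) := by
  classical
  choose σ hσ using fun x => exists_mem_eq_inf' univ_nonempty (c x)
  refine ⟨fun x => Pi.single (σ x) 1, fun x _ => single_mem_stdSimplex ℝ (σ x), ?_⟩
  simp only [totalCost_apply, Pi.single_apply, mul_ite, mul_one, mul_zero, sum_ite_eq',
    mem_univ, if_true]
  exact sum_congr rfl fun x _ => (hσ x).2.symm

def dualObjective (D Rf : (x : X) → M x → ℝ) (R l : ℝ) : ℝ :=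
  -l * R + ∑ x, univ.inf' univ_nonempty fun m => D x m + l * Rf x m

lemma dualObjective_le_totalCost (D Rf : (x : X) → M x → ℝ) {R l : ℝ} (hl : 0 ≤ l)
    {z : (x : X) → M x → ℝ} (hz : z ∈ stochasticFamilies M) (hzR : totalCost Rf z ≤ R) :
    dualObjective D Rf R l ≤ totalCost D z := by
  have hinf := sum_inf'_le_totalCost (fun x m => D x m + l * Rf x m) hz
  rw [totalCost_add_mul] at hinf
  unfold dualObjective
  nlinarith

lemma exists_lt_dualObjective (D Rf : (x : X) → M x → ℝ) {R V : ℝ}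
    (hR : ∑ x, univ.inf' univ_nonempty (Rf x) ≤ R)
    (hV : ∀ z ∈ stochasticFamilies M, totalCost Rf z ≤ R → V < totalCost D z) :
    ∃ l, 0 ≤ l ∧ V < dualObjective D Rf R l := by
  set φ := (totalCost Rf).prod (totalCost D)
  obtain ⟨z₀, hz₀, hz₀R⟩ := exists_totalCost_eq_sum_inf' Rf
  obtain ⟨l, hl, hlV⟩ := exists_lagrange_multiplier
    (isCompact_stochasticFamilies.image φ.continuous_of_finiteDimensional)
    (convex_stochasticFamilies.linear_image φ) (Set.mem_image_of_mem φ hz₀) (hz₀R.trans_le hR)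
    (Set.forall_mem_image.2 hV)
  obtain ⟨z, hz, hzl⟩ := exists_totalCost_eq_sum_inf' fun x m => D x m + l * Rf x m
  refine ⟨l, hl, ?_⟩
  have hVz : V < totalCost D z + l * (totalCost Rf z - R) := hlV (φ z) (Set.mem_image_of_mem φ hz)
  rw [totalCost_add_mul] at hzl
  unfold dualObjective
  linarith

end StochasticFamily

lemma csInf_eq_csSup_of_forall_exists_gt {α : Type*} [ConditionallyCompleteLinearOrder α]
    {P G : Set α} (hP : P.Nonempty) (hG : G.Nonempty) (hGP : ∀ g ∈ G, ∀ v ∈ P, g ≤ v)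
    (hgap : ∀ c, (∀ v ∈ P, c < v) → ∃ g ∈ G, c < g) : sInf P = sSup G := by
  refine le_antisymm (le_of_forall_lt fun c hc => ?_)
    (csSup_le hG fun g hg => le_csInf hP (hGP g hg))
  obtain ⟨g, hg, hcg⟩ := hgap c fun v hv =>
    hc.trans_le (csInf_le ⟨_, hGP _ hG.some_mem⟩ hv)
  exact hcg.trans_le (le_csSup ⟨_, fun g hg => hGP g hg _ hP.some_mem⟩ hg)

theorem primal_eq_dual_general
    (X : Type) [Fintype X]
    (M : X → Type) [∀ x, Fintype (M x)] [∀ x, Nonempty (M x)]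
    (D Rf : (x : X) → M x → ℝ)
    (R : ℝ)
    (hR : R ≥ ∑ x, Finset.univ.inf' Finset.univ_nonempty (Rf x)) :
    sInf { v : ℝ | ∃ z : (x : X) → M x → ℝ,
        (∀ x m, 0 ≤ z x m) ∧ (∀ x, ∑ m, z x m = 1) ∧
        (∑ x, ∑ m, Rf x m * z x m ≤ R) ∧
        v = ∑ x, ∑ m, D x m * z x m } =
    sSup { v : ℝ | ∃ l : ℝ, 0 ≤ l ∧
        v = -l * R + ∑ x, Finset.univ.inf' Finset.univ_nonempty
          (fun m => D x m + l * Rf x m) } := by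
  obtain ⟨z₀, hz₀, hz₀R⟩ := exists_totalCost_eq_sum_inf' Rf
  obtain ⟨hz₀_nonneg, hz₀_sum⟩ := mem_stochasticFamilies.1 hz₀
  refine csInf_eq_csSup_of_forall_exists_gt ⟨_, z₀, hz₀_nonneg, hz₀_sum, hz₀R.trans_le hR, rfl⟩
    ⟨_, 0, le_rfl, rfl⟩ ?_ fun V hV => ?_
  · rintro _ ⟨l, hl, rfl⟩ _ ⟨z, hz_nonneg, hz_sum, hzR, rfl⟩
    exact dualObjective_le_totalCost D Rf hl (mem_stochasticFamilies.2 ⟨hz_nonneg, hz_sum⟩) hzR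
  · obtain ⟨l, hl, hVl⟩ := exists_lt_dualObjective D Rf hR fun z hz hzR =>
      hV _ ⟨z, (mem_stochasticFamilies.1 hz).1, (mem_stochasticFamilies.1 hz).2, hzR, rfl⟩
    exact ⟨_, ⟨l, hl, rfl⟩, hVl⟩

/-- Strong duality for the prompt-compression linear program: when the rate `R`
is feasible (i.e. at least the sum over `x` of the minimum of `R_x`), the primal
LP value `V(R)` equals `sup_{λ ≥ 0} g(λ)`, where
`g(λ) = -λR + Σ_x min_m (D_x(m) + λ R_x(m))`. -/
theorem primal_eq_dual
    (X : Type) [Fintype X] [Nonempty X]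
    (M : X → Type) [∀ x, Fintype (M x)] [∀ x, Nonempty (M x)]
    (D Rf : (x : X) → M x → ℝ)
    (hD : ∀ x m, 0 ≤ D x m) (hRf : ∀ x m, 0 ≤ Rf x m)
    (R : ℝ)
    (hR : R ≥ ∑ x, Finset.univ.inf' Finset.univ_nonempty (Rf x)) :
    sInf { v : ℝ | ∃ z : (x : X) → M x → ℝ,
        (∀ x m, 0 ≤ z x m) ∧ (∀ x, ∑ m, z x m = 1) ∧
        (∑ x, ∑ m, Rf x m * z x m ≤ R) ∧
        v = ∑ x, ∑ m, D x m * z x m } =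
    sSup { v : ℝ | ∃ l : ℝ, 0 ≤ l ∧
        v = -l * R + ∑ x, Finset.univ.inf' Finset.univ_nonempty
          (fun m => D x m + l * Rf x m) } :=
  primal_eq_dual_general X M D Rf R hR
end

section
/- (Intermediate dual form) Let R ∈ ℝ satisfy R ≥ Σ_{x∈𝒳} min_{m∈ℳ_x} R_x(m). Then V(R) = sup{ −λR − Σ_{x∈𝒳} μ_x : λ ≥ 0, μ : 𝒳 → ℝ, and D_x(m) + λ R_x(m) + μ_x ≥ 0 for all x ∈ 𝒳 and all m ∈ ℳ_x }. -/
open Finset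

lemma my_continuous_inf' {ι X : Type*} [TopologicalSpace X] (s : Finset ι) (H : s.Nonempty)
    (f : ι → X → ℝ) (hf : ∀ i, Continuous (f i)) :
    Continuous (fun x => s.inf' H (fun i => f i x)) := by
  induction H using Finset.Nonempty.cons_induction with
  | singleton i => simpa using hf i
  | cons i s hi hs ih =>
      have : (fun x => (Finset.cons i s hi).inf' (Finset.cons_nonempty hi) (fun j => f j x))
          = fun x => min (f i x) (s.inf' hs (fun j => f j x)) := by
        ext x; rw [Finset.inf'_cons]
      rw [this]; exact (hf i).min ih

lemma my_small_eps {ι : Type*} [Fintype ι] (a b : ι → ℝ)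
    (hb : ∀ i, 0 ≤ b i) (h : ∀ i, 0 < a i → 0 < b i) :
    ∃ ε : ℝ, 0 < ε ∧ ∀ i, ε * a i ≤ b i := by
  classical
  by_cases hs : (Finset.univ.filter (fun i => 0 < a i)).Nonempty
  · set s := Finset.univ.filter (fun i => 0 < a i) with hsdef
    refine ⟨s.inf' hs (fun i => b i / a i), ?_, ?_⟩
    · rw [Finset.lt_inf'_iff]
      intro i hi
      have hai : 0 < a i := (Finset.mem_filter.mp hi).2
      exact div_pos (h i hai) hai
    · intro i
      rcases lt_or_ge 0 (a i) with hai | hai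
      · have hmem : i ∈ s := Finset.mem_filter.mpr ⟨Finset.mem_univ i, hai⟩
        have := Finset.inf'_le (fun i => b i / a i) hmem
        calc s.inf' hs (fun i => b i / a i) * a i ≤ (b i / a i) * a i := by
              exact mul_le_mul_of_nonneg_right this hai.le
          _ = b i := by field_simp
      · exact le_trans (mul_nonpos_of_nonneg_of_nonpos (by
          { have : ∀ i ∈ s, (0:ℝ) < b i / a i := fun i hi =>
              div_pos (h i (Finset.mem_filter.mp hi).2) (Finset.mem_filter.mp hi).2
            exact (le_of_lt ((Finset.lt_inf'_iff _).mpr this)) }) hai) (hb i)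
  · refine ⟨1, one_pos, fun i => ?_⟩
    have : ¬ 0 < a i := fun hai => hs ⟨i, Finset.mem_filter.mpr ⟨Finset.mem_univ i, hai⟩⟩
    simpa using le_trans (le_of_not_gt this) (hb i)

lemma my_big_lam {ι : Type*} [Fintype ι] (a c : ι → ℝ)
    (ha : ∀ i, 0 ≤ a i) (h : ∀ i, a i = 0 → c i ≤ 0) :
    ∃ Λ : ℝ, 0 ≤ Λ ∧ ∀ i, c i ≤ Λ * a i := by
  classical
  by_cases hs : (Finset.univ.filter (fun i => 0 < c i)).Nonempty
  · set s := Finset.univ.filter (fun i => 0 < c i) with hsdef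
    refine ⟨max 0 (s.sup' hs (fun i => c i / a i)), le_max_left _ _, fun i => ?_⟩
    rcases lt_or_ge 0 (c i) with hci | hci
    · have hmem : i ∈ s := Finset.mem_filter.mpr ⟨Finset.mem_univ i, hci⟩
      have hai : 0 < a i := lt_of_le_of_ne (ha i) (fun he => absurd (h i he.symm) (not_le.mpr hci))
      have h1 : c i / a i ≤ s.sup' hs (fun i => c i / a i) := Finset.le_sup' (fun i => c i / a i) hmem
      have h2 : s.sup' hs (fun i => c i / a i) ≤ max 0 (s.sup' hs (fun i => c i / a i)) := le_max_right _ _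
      calc c i = (c i / a i) * a i := by field_simp
        _ ≤ max 0 (s.sup' hs (fun i => c i / a i)) * a i :=
            mul_le_mul_of_nonneg_right (h1.trans h2) hai.le
    · exact hci.trans (mul_nonneg (le_max_left _ _) (ha i))
  · refine ⟨0, le_refl _, fun i => ?_⟩
    have : ¬ 0 < c i := fun hci => hs ⟨i, Finset.mem_filter.mpr ⟨Finset.mem_univ i, hci⟩⟩
    simpa using le_of_not_gt this

noncomputable def fmin {X : Type} {M : X → Type} [∀ x, Fintype (M x)] [∀ x, Nonempty (M x)]
    (D Rf : (x : X) → M x → ℝ) (l : ℝ) (x : X) : ℝ :=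
  Finset.univ.inf' Finset.univ_nonempty (fun m => D x m + l * Rf x m)

lemma fmin_le {X : Type} {M : X → Type} [∀ x, Fintype (M x)] [∀ x, Nonempty (M x)]
    (D Rf : (x : X) → M x → ℝ) (l : ℝ) (x : X) (m : M x) :
    fmin D Rf l x ≤ D x m + l * Rf x m :=
  Finset.inf'_le _ (Finset.mem_univ m)

lemma fmin_continuous {X : Type} {M : X → Type} [∀ x, Fintype (M x)] [∀ x, Nonempty (M x)]
    (D Rf : (x : X) → M x → ℝ) (x : X) : Continuous (fun l => fmin D Rf l x) :=
  my_continuous_inf' Finset.univ Finset.univ_nonempty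
    (fun m l => D x m + l * Rf x m)
    (fun m => continuous_const.add (continuous_id.mul continuous_const))

lemma core (X : Type) [Fintype X] [Nonempty X]
    (M : X → Type) [∀ x, Fintype (M x)] [∀ x, Nonempty (M x)]
    (D Rf : (x : X) → M x → ℝ)
    (hD : ∀ x m, 0 ≤ D x m) (hRf : ∀ x m, 0 ≤ Rf x m) (R : ℝ)
    (hR : R ≥ ∑ x, Finset.univ.inf' Finset.univ_nonempty (Rf x)) :
    ∃ l : ℝ, 0 ≤ l ∧ ∃ z : (x : X) → M x → ℝ,
      (∀ x m, 0 ≤ z x m) ∧ (∀ x, ∑ m, z x m = 1) ∧ (∑ x, ∑ m, Rf x m * z x m ≤ R) ∧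
      ∑ x, ∑ m, D x m * z x m = (∑ x, fmin D Rf l x) - l * R := by
  classical
  set g : ℝ → ℝ := fun l => (∑ x, fmin D Rf l x) - l * R with hg
  have hgc : Continuous g := by
    apply Continuous.sub
    · exact continuous_finset_sum _ (fun x _ => fmin_continuous D Rf x)
    · exact continuous_id.mul continuous_const
  -- minimal rate per x
  set minR : X → ℝ := fun x => Finset.univ.inf' Finset.univ_nonempty (Rf x) with hminR
  have hminR_le : ∀ x m, minR x ≤ Rf x m := fun x m => Finset.inf'_le _ (Finset.mem_univ m)
  -- choose mstar x minimizing D among rate-minimizers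
  have hms : ∀ x : X, ∃ m : M x, Rf x m = minR x ∧ ∀ m', Rf x m' = minR x → D x m ≤ D x m' := by
    intro x
    obtain ⟨m0, _, hm0⟩ := Finset.exists_mem_eq_inf' (Finset.univ_nonempty (α := M x)) (Rf x)
    set A0 : Finset (M x) := Finset.univ.filter (fun m => Rf x m = minR x) with hA0
    have hA0ne : A0.Nonempty := ⟨m0, Finset.mem_filter.mpr ⟨Finset.mem_univ _, hm0.symm⟩⟩
    obtain ⟨m1, hm1A, hm1⟩ := Finset.exists_min_image A0 (D x) hA0ne
    exact ⟨m1, (Finset.mem_filter.mp hm1A).2,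
      fun m' hm' => hm1 m' (Finset.mem_filter.mpr ⟨Finset.mem_univ _, hm'⟩)⟩
  choose mstar hmstarR hmstarD using hms
  -- a large Λ beyond which g is dominated by g Λ
  obtain ⟨Λ, hΛ0, hΛ⟩ := my_big_lam (ι := (x : X) × M x)
      (fun i => Rf i.1 i.2 - minR i.1) (fun i => D i.1 (mstar i.1) - D i.1 i.2)
      (fun i => by simpa using hminR_le i.1 i.2)
      (fun i hi => by
        have : Rf i.1 i.2 = minR i.1 := by linarith [sub_eq_zero.mp hi]
        show D i.1 (mstar i.1) - D i.1 i.2 ≤ 0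
        linarith [hmstarD i.1 i.2 this])
  have hΛ' : ∀ (x : X) (m : M x), D x (mstar x) - D x m ≤ Λ * (Rf x m - minR x) :=
    fun x m => hΛ ⟨x, m⟩
  have hfminΛ : ∀ x, fmin D Rf Λ x = D x (mstar x) + Λ * minR x := by
    intro x
    apply le_antisymm
    · have := fmin_le D Rf Λ x (mstar x)
      rw [hmstarR x] at this; exact this
    · apply Finset.le_inf'
      intro m _
      have := hΛ' x m
      nlinarith
  have hdom : ∀ l, Λ ≤ l → g l ≤ g Λ := by
    intro l hl
    have h1 : g l ≤ (∑ x, D x (mstar x)) + l * ((∑ x, minR x) - R) := by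
      have : ∀ x, fmin D Rf l x ≤ D x (mstar x) + l * minR x := by
        intro x
        have := fmin_le D Rf l x (mstar x)
        rw [hmstarR x] at this; exact this
      have hs := Finset.sum_le_sum (fun x (_ : x ∈ Finset.univ) => this x)
      simp only [hg]
      rw [Finset.sum_add_distrib, ← Finset.mul_sum] at hs
      have e : (∑ x, D x (mstar x)) + l * ((∑ x, minR x) - R)
          = ((∑ x, D x (mstar x)) + l * (∑ x, minR x)) - l * R := by ring
      rw [e]
      linarith
    have h2 : (∑ x, minR x) - R ≤ 0 := by
      simp only [hminR]
      linarith [hR]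
    have h3 : g Λ = (∑ x, D x (mstar x)) + Λ * ((∑ x, minR x) - R) := by
      simp only [hg]
      rw [Finset.sum_congr rfl (fun x _ => hfminΛ x)]
      rw [Finset.sum_add_distrib, ← Finset.mul_sum]
      ring
    rw [h3]
    nlinarith
  -- maximize g on [0, Λ]
  obtain ⟨lstar, hlstar_mem, hlstar_max⟩ :=
    isCompact_Icc.exists_isMaxOn (Set.nonempty_Icc.mpr hΛ0) hgc.continuousOn
      (s := Set.Icc (0:ℝ) Λ)
  obtain ⟨hlstar0, hlstarΛ⟩ := Set.mem_Icc.mp hlstar_mem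
  have hmax : ∀ l, 0 ≤ l → g l ≤ g lstar := by
    intro l hl
    rcases le_or_gt l Λ with h | h
    · exact hlstar_max (Set.mem_Icc.mpr ⟨hl, h⟩)
    · exact (hdom l h.le).trans (hlstar_max (Set.mem_Icc.mpr ⟨hΛ0, le_refl _⟩))
  -- argmin sets at lstar
  set A : (x : X) → Finset (M x) :=
    fun x => Finset.univ.filter (fun m => D x m + lstar * Rf x m = fmin D Rf lstar x) with hA
  have hAne : ∀ x, (A x).Nonempty := by
    intro x
    obtain ⟨m0, _, hm0⟩ := Finset.exists_mem_eq_inf' (Finset.univ_nonempty (α := M x))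
      (fun m => D x m + lstar * Rf x m)
    exact ⟨m0, Finset.mem_filter.mpr ⟨Finset.mem_univ _, hm0.symm⟩⟩
  have hAmem : ∀ x m, m ∈ A x → D x m + lstar * Rf x m = fmin D Rf lstar x :=
    fun x m hm => (Finset.mem_filter.mp hm).2
  set rplus : X → ℝ := fun x => (A x).inf' (hAne x) (Rf x) with hrplus
  set rminus : X → ℝ := fun x => (A x).sup' (hAne x) (Rf x) with hrminus
  obtain ⟨mplus, hmplusA, hmplusR⟩ :
      ∃ mp : (x : X) → M x, (∀ x, mp x ∈ A x) ∧ (∀ x, Rf x (mp x) = rplus x) := by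
    have : ∀ x, ∃ m, m ∈ A x ∧ Rf x m = rplus x := by
      intro x
      obtain ⟨m, hm, hm'⟩ := Finset.exists_mem_eq_inf' (hAne x) (Rf x)
      exact ⟨m, hm, hm'.symm⟩
    choose mp h1 h2 using this
    exact ⟨mp, h1, h2⟩
  obtain ⟨mminus, hmminusA, hmminusR⟩ :
      ∃ mp : (x : X) → M x, (∀ x, mp x ∈ A x) ∧ (∀ x, Rf x (mp x) = rminus x) := by
    have : ∀ x, ∃ m, m ∈ A x ∧ Rf x m = rminus x := by
      intro x
      obtain ⟨m, hm, hm'⟩ := Finset.exists_mem_eq_sup' (hAne x) (Rf x)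
      exact ⟨m, hm, hm'.symm⟩
    choose mp h1 h2 using this
    exact ⟨mp, h1, h2⟩
  have hpm : ∀ x, rplus x ≤ rminus x := by
    intro x
    rw [← hmplusR x]
    exact Finset.le_sup' (Rf x) (hmplusA x)
  -- gap nonneg
  have hgap : ∀ (x : X) (m : M x), 0 ≤ D x m + lstar * Rf x m - fmin D Rf lstar x :=
    fun x m => by linarith [fmin_le D Rf lstar x m]
  have hgap_pos : ∀ (x : X) (m : M x),
      D x m + lstar * Rf x m - fmin D Rf lstar x ≤ 0 → m ∈ A x := by
    intro x m hm
    exact Finset.mem_filter.mpr ⟨Finset.mem_univ _, by linarith [hgap x m]⟩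
  -- Claim 1 : ∑ rplus ≤ R
  have hplusR : (∑ x, rplus x) ≤ R := by
    by_contra hcon
    push_neg at hcon
    obtain ⟨ε, hε, hεle⟩ := my_small_eps (ι := (x : X) × M x)
      (fun i => rplus i.1 - Rf i.1 i.2)
      (fun i => D i.1 i.2 + lstar * Rf i.1 i.2 - fmin D Rf lstar i.1)
      (fun i => hgap i.1 i.2)
      (fun i hi => by
        by_contra hb
        push_neg at hb
        have := hgap_pos i.1 i.2 hb
        have h2 : rplus i.1 ≤ Rf i.1 i.2 := Finset.inf'_le _ this
        linarith)
    have hstep : ∀ x, fmin D Rf lstar x + ε * rplus x ≤ fmin D Rf (lstar + ε) x := by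
      intro x
      apply Finset.le_inf'
      intro m _
      have := hεle ⟨x, m⟩
      simp only at this
      nlinarith
    have hsum : (∑ x, fmin D Rf lstar x) + ε * (∑ x, rplus x) ≤ ∑ x, fmin D Rf (lstar + ε) x := by
      have := Finset.sum_le_sum (fun x (_ : x ∈ Finset.univ) => hstep x)
      rw [Finset.sum_add_distrib, ← Finset.mul_sum] at this
      exact this
    have : g lstar < g (lstar + ε) := by
      simp only [hg]
      nlinarith
    linarith [hmax (lstar + ε) (by linarith)]
  -- Claim 2 : lstar > 0 → R ≤ ∑ rminus
  have hminusR : 0 < lstar → R ≤ ∑ x, rminus x := by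
    intro hls
    by_contra hcon
    push_neg at hcon
    obtain ⟨ε0, hε0, hεle0⟩ := my_small_eps (ι := (x : X) × M x)
      (fun i => Rf i.1 i.2 - rminus i.1)
      (fun i => D i.1 i.2 + lstar * Rf i.1 i.2 - fmin D Rf lstar i.1)
      (fun i => hgap i.1 i.2)
      (fun i hi => by
        by_contra hb
        push_neg at hb
        have := hgap_pos i.1 i.2 hb
        have h2 : Rf i.1 i.2 ≤ rminus i.1 := Finset.le_sup' _ this
        linarith)
    set ε : ℝ := min ε0 lstar with hεdef
    have hε : 0 < ε := lt_min hε0 hls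
    have hεls : ε ≤ lstar := min_le_right _ _
    have hεle : ∀ (x : X) (m : M x),
        ε * (Rf x m - rminus x) ≤ D x m + lstar * Rf x m - fmin D Rf lstar x := by
      intro x m
      rcases le_or_gt 0 (Rf x m - rminus x) with h | h
      · calc ε * (Rf x m - rminus x) ≤ ε0 * (Rf x m - rminus x) :=
              mul_le_mul_of_nonneg_right (min_le_left _ _) h
          _ ≤ _ := hεle0 ⟨x, m⟩
      · have : ε * (Rf x m - rminus x) ≤ 0 := mul_nonpos_of_nonneg_of_nonpos hε.le h.le
        linarith [hgap x m]
    have hstep : ∀ x, fmin D Rf lstar x - ε * rminus x ≤ fmin D Rf (lstar - ε) x := by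
      intro x
      apply Finset.le_inf'
      intro m _
      have := hεle x m
      nlinarith
    have hsum : (∑ x, fmin D Rf lstar x) - ε * (∑ x, rminus x) ≤ ∑ x, fmin D Rf (lstar - ε) x := by
      have := Finset.sum_le_sum (fun x (_ : x ∈ Finset.univ) => hstep x)
      rw [Finset.sum_sub_distrib, ← Finset.mul_sum] at this
      exact this
    have : g lstar < g (lstar - ε) := by
      simp only [hg]
      nlinarith
    linarith [hmax (lstar - ε) (by linarith)]
  -- choose mixing parameter t
  obtain ⟨t, ht0, ht1, hrate_le, hrate_eq⟩ :
      ∃ t : ℝ, 0 ≤ t ∧ t ≤ 1 ∧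
        (1 - t) * (∑ x, rminus x) + t * (∑ x, rplus x) ≤ R ∧
        lstar * ((1 - t) * (∑ x, rminus x) + t * (∑ x, rplus x)) = lstar * R := by
    rcases lt_or_ge (∑ x, rminus x) R with h | h
    · -- then lstar = 0
      have hls0 : lstar = 0 := by
        by_contra hne
        have := hminusR (lt_of_le_of_ne hlstar0 (Ne.symm hne))
        linarith
      exact ⟨0, le_refl _, zero_le_one, by simpa using h.le, by rw [hls0]; ring⟩
    · have hsum_pm : (∑ x, rplus x) ≤ ∑ x, rminus x :=
        Finset.sum_le_sum (fun x _ => hpm x)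
      rcases eq_or_lt_of_le hsum_pm with heq | hlt
      · refine ⟨0, le_refl _, zero_le_one, ?_, ?_⟩
        · simp only [one_mul, zero_mul, sub_zero, mul_zero, add_zero]
          rw [← heq] at h ⊢
          linarith [hplusR]
        · simp only [one_mul, zero_mul, sub_zero, mul_zero, add_zero]
          rw [← heq]
          have : (∑ x, rplus x) = R := le_antisymm hplusR (by rw [heq]; exact h)
          rw [this]
      · set S := ∑ x, rminus x
        set P := ∑ x, rplus x
        have hne : S - P ≠ 0 := ne_of_gt (by linarith)
        have hu : (S - R) / (S - P) * (S - P) = S - R := div_mul_cancel₀ _ hne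
        have hu1 : (S - R) / (S - P) * S - (S - R) / (S - P) * P = S - R := by
          rw [← mul_sub]; exact hu
        have key : (1 - (S - R) / (S - P)) * S + (S - R) / (S - P) * P = R := by
          have e : (1 - (S - R) / (S - P)) * S + (S - R) / (S - P) * P
              = S - ((S - R) / (S - P) * S - (S - R) / (S - P) * P) := by ring
          rw [e, hu1]; ring
        refine ⟨(S - R) / (S - P), ?_, ?_, ?_, ?_⟩
        · apply div_nonneg <;> linarith
        · rw [div_le_one (by linarith)]
          linarith [hplusR]
        · linarith [key]
        · rw [key]
  -- build z
  refine ⟨lstar, hlstar0, fun x m =>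
    (1 - t) * (if m = mminus x then 1 else 0) + t * (if m = mplus x then 1 else 0),
    ?_, ?_, ?_, ?_⟩
  · intro x m
    dsimp only
    have h1 : (0:ℝ) ≤ (if m = mminus x then (1:ℝ) else 0) := by positivity
    have h2 : (0:ℝ) ≤ (if m = mplus x then (1:ℝ) else 0) := by positivity
    nlinarith
  · intro x
    rw [Finset.sum_add_distrib]
    simp [← Finset.mul_sum, Finset.sum_ite_eq']
  · have hx : ∀ x, ∑ m, Rf x m * ((1 - t) * (if m = mminus x then (1:ℝ) else 0)
        + t * (if m = mplus x then 1 else 0))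
        = (1 - t) * rminus x + t * rplus x := by
      intro x
      rw [← hmminusR x, ← hmplusR x]
      simp only [mul_add]
      rw [Finset.sum_add_distrib]
      congr 1
      · simp only [mul_ite, mul_one, mul_zero, Finset.sum_ite_eq', Finset.mem_univ, if_true]
        ring
      · simp only [mul_ite, mul_one, mul_zero, Finset.sum_ite_eq', Finset.mem_univ, if_true]
        ring
    rw [Finset.sum_congr rfl (fun x _ => hx x), Finset.sum_add_distrib,
      ← Finset.mul_sum, ← Finset.mul_sum]
    exact hrate_le
  · have hDm : ∀ (x : X) (m : M x), m ∈ A x → D x m = fmin D Rf lstar x - lstar * Rf x m :=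
      fun x m hm => by linarith [hAmem x m hm]
    have hx : ∀ x, ∑ m, D x m * ((1 - t) * (if m = mminus x then (1:ℝ) else 0)
        + t * (if m = mplus x then 1 else 0))
        = (1 - t) * D x (mminus x) + t * D x (mplus x) := by
      intro x
      simp only [mul_add]
      rw [Finset.sum_add_distrib]
      congr 1
      · simp only [mul_ite, mul_one, mul_zero, Finset.sum_ite_eq', Finset.mem_univ, if_true]
        ring
      · simp only [mul_ite, mul_one, mul_zero, Finset.sum_ite_eq', Finset.mem_univ, if_true]
        ring
    rw [Finset.sum_congr rfl (fun x _ => hx x)]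
    have hx2 : ∀ x, (1 - t) * D x (mminus x) + t * D x (mplus x)
        = fmin D Rf lstar x - lstar * ((1 - t) * rminus x + t * rplus x) := by
      intro x
      rw [hDm x (mminus x) (hmminusA x), hDm x (mplus x) (hmplusA x),
        hmminusR x, hmplusR x]
      ring
    rw [Finset.sum_congr rfl (fun x _ => hx2 x), Finset.sum_sub_distrib, ← Finset.mul_sum]
    have : (∑ x, ((1 - t) * rminus x + t * rplus x))
        = (1 - t) * (∑ x, rminus x) + t * (∑ x, rplus x) := by
      rw [Finset.sum_add_distrib, ← Finset.mul_sum, ← Finset.mul_sum]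
    rw [this, hrate_eq]

/-- Intermediate dual form: for feasible rate `R`, the primal LP value equals
the supremum of `-λR - Σ_x μ_x` over `λ ≥ 0` and `μ : 𝒳 → ℝ` satisfying
`D_x(m) + λ R_x(m) + μ_x ≥ 0` for every `x` and `m`. -/
theorem primal_eq_intermediate_dual
    (X : Type) [Fintype X] [Nonempty X]
    (M : X → Type) [∀ x, Fintype (M x)] [∀ x, Nonempty (M x)]
    (D Rf : (x : X) → M x → ℝ)
    (hD : ∀ x m, 0 ≤ D x m) (hRf : ∀ x m, 0 ≤ Rf x m)
    (R : ℝ)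
    (hR : R ≥ ∑ x, Finset.univ.inf' Finset.univ_nonempty (Rf x)) :
    sInf { v : ℝ | ∃ z : (x : X) → M x → ℝ,
        (∀ x m, 0 ≤ z x m) ∧ (∀ x, ∑ m, z x m = 1) ∧
        (∑ x, ∑ m, Rf x m * z x m ≤ R) ∧
        v = ∑ x, ∑ m, D x m * z x m } =
    sSup { v : ℝ | ∃ l : ℝ, ∃ μ : X → ℝ, 0 ≤ l ∧
        (∀ x, ∀ m : M x, D x m + l * Rf x m + μ x ≥ 0) ∧
        v = -l * R - ∑ x, μ x } := by
  classical
  set P := { v : ℝ | ∃ z : (x : X) → M x → ℝ,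
        (∀ x m, 0 ≤ z x m) ∧ (∀ x, ∑ m, z x m = 1) ∧
        (∑ x, ∑ m, Rf x m * z x m ≤ R) ∧
        v = ∑ x, ∑ m, D x m * z x m } with hP
  set Q := { v : ℝ | ∃ l : ℝ, ∃ μ : X → ℝ, 0 ≤ l ∧
        (∀ x, ∀ m : M x, D x m + l * Rf x m + μ x ≥ 0) ∧
        v = -l * R - ∑ x, μ x } with hQ
  -- weak duality
  have weak : ∀ v ∈ Q, ∀ w ∈ P, v ≤ w := by
    rintro v ⟨l, μ, hl0, hfeas, rfl⟩ w ⟨z, hz0, hz1, hzR, rfl⟩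
    have key : (0:ℝ) ≤ ∑ x, ∑ m, (D x m + l * Rf x m + μ x) * z x m :=
      Finset.sum_nonneg fun x _ => Finset.sum_nonneg fun m _ =>
        mul_nonneg (hfeas x m) (hz0 x m)
    have hx : ∀ x, ∑ m, (D x m + l * Rf x m + μ x) * z x m
        = (∑ m, D x m * z x m) + l * (∑ m, Rf x m * z x m) + μ x := by
      intro x
      have : ∀ m : M x, (D x m + l * Rf x m + μ x) * z x m
          = D x m * z x m + l * (Rf x m * z x m) + μ x * z x m := fun m => by ring
      rw [Finset.sum_congr rfl (fun m _ => this m), Finset.sum_add_distrib,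
        Finset.sum_add_distrib, ← Finset.mul_sum, ← Finset.mul_sum, hz1 x, mul_one]
    have hexp : ∑ x, ∑ m, (D x m + l * Rf x m + μ x) * z x m
        = (∑ x, ∑ m, D x m * z x m) + l * (∑ x, ∑ m, Rf x m * z x m) + ∑ x, μ x := by
      rw [Finset.sum_congr rfl (fun x _ => hx x), Finset.sum_add_distrib,
        Finset.sum_add_distrib, ← Finset.mul_sum]
    rw [hexp] at key
    have hlR : l * (∑ x, ∑ m, Rf x m * z x m) ≤ l * R :=
      mul_le_mul_of_nonneg_left hzR hl0
    linarith
  -- strong duality witness from core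
  obtain ⟨l, hl0, z, hz0, hz1, hzR, hzval⟩ := core X M D Rf hD hRf R hR
  have hwP : (∑ x, ∑ m, D x m * z x m) ∈ P := ⟨z, hz0, hz1, hzR, rfl⟩
  have hwQ : (∑ x, ∑ m, D x m * z x m) ∈ Q := by
    refine ⟨l, fun x => -(fmin D Rf l x), hl0, ?_, ?_⟩
    · intro x m
      have := fmin_le D Rf l x m
      simp only [ge_iff_le]
      linarith
    · rw [hzval, Finset.sum_neg_distrib]
      ring
  have hQne : Q.Nonempty := ⟨_, hwQ⟩
  have hPne : P.Nonempty := ⟨_, hwP⟩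
  have hPbdd : BddBelow P := ⟨_, fun w hw => weak _ hwQ w hw⟩
  have hQbdd : BddAbove Q := ⟨_, fun v hv => weak v hv _ hwP⟩
  apply le_antisymm
  · calc sInf P ≤ ∑ x, ∑ m, D x m * z x m := csInf_le hPbdd hwP
      _ ≤ sSup Q := le_csSup hQbdd hwQ
  · exact csSup_le hQne fun v hv => le_csInf hPne fun w hw => weak v hv w hw
end

section
/- (Theorem 2, conditional query-aware dual LP) Fix q ∈ 𝒬 with P_Q(q) > 0, define D^q_{x,m} := Σ_{y∈𝒴} P_{XY|Q}(x,y|q) d(y, LLM(m,q)) and R^q_{x,m} := P_{X|Q}(x|q)·len(m)/len(x), and let R ∈ ℝ satisfy R ≥ Σ_{x∈𝒳} min_{m∈ℳ_x} R^q_{x,m}. Then the conditional query-aware distortion-rate function satisfies D*_q(R) = sup_{λ ≥ 0} ( −λR + Σ_{x∈𝒳} min_{m∈ℳ_x} (D^q_{x,m} + λ R^q_{x,m}) ). -/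
open Finset in
theorem dual_LP_aux {α ι : Type*} [Fintype ι] [Nonempty ι] [DecidableEq α]
    (K : ι → Finset α) (hK : ∀ i, (K i).Nonempty)
    (D Rf : ι → α → ℝ) (R : ℝ)
    (hR : ∑ i, (K i).inf' (hK i) (Rf i) ≤ R) :
    sInf { v : ℝ | ∃ p : ι → α → ℝ,
        (∀ i, ∀ m ∈ K i, 0 ≤ p i m) ∧
        (∀ i, ∑ m ∈ K i, p i m = 1) ∧
        (∑ i, ∑ m ∈ K i, Rf i m * p i m ≤ R) ∧
        v = ∑ i, ∑ m ∈ K i, D i m * p i m } =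
    sSup { v : ℝ | ∃ l : ℝ, 0 ≤ l ∧
        v = -l * R + ∑ i, (K i).inf' (hK i) (fun m => D i m + l * Rf i m) } := by
  classical
  set Pr := { v : ℝ | ∃ p : ι → α → ℝ,
        (∀ i, ∀ m ∈ K i, 0 ≤ p i m) ∧
        (∀ i, ∑ m ∈ K i, p i m = 1) ∧
        (∑ i, ∑ m ∈ K i, Rf i m * p i m ≤ R) ∧
        v = ∑ i, ∑ m ∈ K i, D i m * p i m } with hPr
  set Du := { v : ℝ | ∃ l : ℝ, 0 ≤ l ∧
        v = -l * R + ∑ i, (K i).inf' (hK i) (fun m => D i m + l * Rf i m) } with hDu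
  set f : ι → ℝ → ℝ := fun i l => (K i).inf' (hK i) (fun m => D i m + l * Rf i m) with hf
  set A : ι → ℝ → Finset α :=
    fun i l => (K i).filter (fun m => D i m + l * Rf i m = f i l) with hA
  have hAK : ∀ i l, A i l ⊆ K i := fun i l => filter_subset _ _
  have hAval : ∀ i l, ∀ m ∈ A i l, D i m + l * Rf i m = f i l := by
    intro i l m hm; exact (mem_filter.1 hm).2
  have hfle : ∀ i l, ∀ m ∈ K i, f i l ≤ D i m + l * Rf i m := by
    intro i l m hm; exact inf'_le _ hm
  have hAne : ∀ i l, (A i l).Nonempty := by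
    intro i l
    obtain ⟨m, hm, hv⟩ := exists_mem_eq_inf' (hK i) (fun m => D i m + l * Rf i m)
    exact ⟨m, mem_filter.2 ⟨hm, hv.symm⟩⟩
  -- near: minimizer sets shrink near any point
  have near : ∀ l₀ : ℝ, ∃ δ > 0, ∀ l : ℝ, |l - l₀| < δ → ∀ i, A i l ⊆ A i l₀ := by
    intro l₀
    have key : ∀ i, ∃ δ > 0, ∀ l : ℝ, |l - l₀| < δ → A i l ⊆ A i l₀ := by
      intro i
      obtain ⟨m₀, hm₀⟩ := hAne i l₀
      by_cases hne : ((K i) \ A i l₀).Nonempty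
      · refine ⟨((K i) \ A i l₀).inf' hne
          (fun m => (D i m + l₀ * Rf i m - f i l₀) / (|Rf i m - Rf i m₀| + 1)), ?_, ?_⟩
        · show (0:ℝ) < _
          rw [Finset.lt_inf'_iff]
          intro m hm
          rw [mem_sdiff] at hm
          have h1 : f i l₀ ≤ D i m + l₀ * Rf i m := hfle i l₀ m hm.1
          have h2 : D i m + l₀ * Rf i m ≠ f i l₀ := by
            intro h; exact hm.2 (mem_filter.2 ⟨hm.1, h⟩)
          have h3 : (0:ℝ) < |Rf i m - Rf i m₀| + 1 := by positivity
          apply div_pos (by cases h1.lt_or_eq with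
            | inl h => linarith
            | inr h => exact absurd h.symm h2) h3
        · intro l hl m hm
          by_contra hmem
          have hmK : m ∈ K i := hAK i l hm
          have hsd : m ∈ (K i) \ A i l₀ := mem_sdiff.2 ⟨hmK, hmem⟩
          have hgap : ((K i) \ A i l₀).inf' hne
              (fun m => (D i m + l₀ * Rf i m - f i l₀) / (|Rf i m - Rf i m₀| + 1)) ≤
              (D i m + l₀ * Rf i m - f i l₀) / (|Rf i m - Rf i m₀| + 1) := inf'_le _ hsd
          set g := D i m + l₀ * Rf i m - f i l₀ with hg
          have h3 : (0:ℝ) < |Rf i m - Rf i m₀| + 1 := by positivity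
          have hdb : |l - l₀| * (|Rf i m - Rf i m₀| + 1) < g := by
            have := lt_of_lt_of_le hl hgap
            calc |l - l₀| * (|Rf i m - Rf i m₀| + 1)
                < (g / (|Rf i m - Rf i m₀| + 1)) * (|Rf i m - Rf i m₀| + 1) := by
                  exact mul_lt_mul_of_pos_right this h3
              _ = g := div_mul_cancel₀ _ (ne_of_gt h3)
          -- value of m at l beats m₀'s value, contradiction with m minimizing
          have hvm : D i m + l * Rf i m = f i l := hAval i l m hm
          have hvm0 : f i l ≤ D i m₀ + l * Rf i m₀ := hfle i l m₀ (hAK i l₀ hm₀)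
          have hv0 : D i m₀ + l₀ * Rf i m₀ = f i l₀ := hAval i l₀ m₀ hm₀
          -- combine
          have habs : (l - l₀) * (Rf i m₀ - Rf i m) ≤ |l - l₀| * |Rf i m - Rf i m₀| := by
            calc (l - l₀) * (Rf i m₀ - Rf i m) ≤ |(l - l₀) * (Rf i m₀ - Rf i m)| :=
                le_abs_self _
              _ = |l - l₀| * |Rf i m₀ - Rf i m| := abs_mul _ _
              _ = |l - l₀| * |Rf i m - Rf i m₀| := by rw [abs_sub_comm (Rf i m₀)]
          have hnn : 0 ≤ |l - l₀| := abs_nonneg _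
          nlinarith
      · exact ⟨1, one_pos, by
          intro l hl m hm
          have hmK : m ∈ K i := hAK i l hm
          by_contra hmem
          exact hne ⟨m, mem_sdiff.2 ⟨hmK, hmem⟩⟩⟩
    choose δi hδipos hδi using key
    refine ⟨Finset.univ.inf' univ_nonempty δi, ?_, ?_⟩
    · show (0:ℝ) < _
      rw [Finset.lt_inf'_iff]; intro i _; exact hδipos i
    · intro l hl i
      exact hδi i l (lt_of_lt_of_le hl (inf'_le _ (mem_univ i)))
  -- rlo / rhi
  set rlo : ℝ → ℝ := fun l => ∑ i, (A i l).inf' (hAne i l) (Rf i) with hrlo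
  set rhi : ℝ → ℝ := fun l => ∑ i, (A i l).sup' (hAne i l) (Rf i) with hrhi
  -- large lambda: rlo ≤ rmin sum ≤ R
  have hlarge : ∃ Λ : ℝ, 0 ≤ Λ ∧ rlo Λ ≤ R := by
    have key : ∀ i, ∃ Λ : ℝ, ∀ l : ℝ, Λ < l → ∀ m ∈ A i l,
        Rf i m ≤ (K i).inf' (hK i) (Rf i) := by
      intro i
      obtain ⟨mh, hmhK, hmhv⟩ := exists_mem_eq_inf' (hK i) (Rf i)
      refine ⟨(K i).sup' (hK i)
        (fun m' => (D i mh - D i m') / (Rf i m' - (K i).inf' (hK i) (Rf i))), ?_⟩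
      intro l hl m hm
      by_contra hgt
      push_neg at hgt
      have hmK : m ∈ K i := hAK i l hm
      have h1 : D i m + l * Rf i m ≤ D i mh + l * Rf i mh :=
        (hAval i l m hm) ▸ hfle i l mh hmhK
      have hpos : 0 < Rf i m - (K i).inf' (hK i) (Rf i) := by linarith
      have h2 : l ≤ (D i mh - D i m) / (Rf i m - (K i).inf' (hK i) (Rf i)) := by
        rw [le_div_iff₀ hpos]; rw [← hmhv] at h1; nlinarith
      have h3 := le_sup' (f := fun m' => (D i mh - D i m') /
        (Rf i m' - (K i).inf' (hK i) (Rf i))) hmK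
      exact absurd (h2.trans h3) (not_le.2 hl)
    choose Li hLi using key
    set L := Finset.univ.sup' univ_nonempty (fun i => max (Li i) 0) + 1 with hLdef
    have hLpos : 0 ≤ L := by
      have h1 : max (Li (Classical.arbitrary ι)) 0 ≤
          Finset.univ.sup' univ_nonempty (fun i => max (Li i) 0) :=
        le_sup' (fun i => max (Li i) 0) (mem_univ _)
      have h2 : (0:ℝ) ≤ max (Li (Classical.arbitrary ι)) 0 := le_max_right _ _
      simp only [hLdef]; linarith
    have hLgt : ∀ i, Li i < L := by
      intro i
      have h1 : max (Li i) 0 ≤ Finset.univ.sup' univ_nonempty (fun i => max (Li i) 0) :=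
        le_sup' (fun i => max (Li i) 0) (mem_univ i)
      have h2 : Li i ≤ max (Li i) 0 := le_max_left _ _
      simp only [hLdef]; linarith
    refine ⟨L, hLpos, ?_⟩
    have h3 : rlo L ≤ ∑ i, (K i).inf' (hK i) (Rf i) := by
      apply Finset.sum_le_sum
      intro i _
      obtain ⟨m, hm, hv⟩ := exists_mem_eq_inf' (hAne i L) (Rf i)
      rw [hv]
      exact hLi i L (hLgt i) m hm
    linarith
  obtain ⟨L, hL0, hLR⟩ := hlarge
  set S : Set ℝ := {l | 0 ≤ l ∧ rlo l ≤ R} with hSdef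
  have hSne : S.Nonempty := ⟨L, hL0, hLR⟩
  have hSbdd : BddBelow S := ⟨0, fun l hl => hl.1⟩
  set ls := sInf S with hlsdef
  have hls0 : 0 ≤ ls := le_csInf hSne (fun l hl => hl.1)
  have hmemS : rlo ls ≤ R := by
    obtain ⟨δ, hδpos, hδ⟩ := near ls
    obtain ⟨l, hlS, hl⟩ := exists_lt_of_csInf_lt hSne (by linarith : sInf S < ls + δ)
    have hlge : ls ≤ l := csInf_le hSbdd hlS
    have habs : |l - ls| < δ := abs_lt.2 ⟨by linarith, by linarith⟩
    have hsub := hδ l habs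
    have h4 : rlo ls ≤ rlo l := by
      apply Finset.sum_le_sum
      intro i _
      obtain ⟨m, hm, hv⟩ := exists_mem_eq_inf' (hAne i l) (Rf i)
      rw [hv]
      exact inf'_le _ (hsub i hm)
    linarith [hlS.2]
  have hhiR : 0 < ls → R ≤ rhi ls := by
    intro hpos
    obtain ⟨δ, hδpos, hδ⟩ := near ls
    set e := min δ ls with hedef
    have hepos : 0 < e := lt_min hδpos hpos
    have hels : e ≤ ls := min_le_right _ _
    have heδ : e ≤ δ := min_le_left _ _
    set l := ls - e/2 with hldef
    have hl0 : 0 ≤ l := by simp only [hldef]; linarith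
    have hlls : l < ls := by simp only [hldef]; linarith
    have habs : |l - ls| < δ := by
      rw [abs_lt]; constructor <;> simp only [hldef] <;> linarith
    have hlnS : l ∉ S := fun h => absurd (csInf_le hSbdd h) (not_le.2 hlls)
    have hRlt : R < rlo l := by
      by_contra h
      exact hlnS ⟨hl0, not_lt.1 h⟩
    have hsub := hδ l habs
    have h5 : rlo l ≤ rhi ls := by
      apply Finset.sum_le_sum
      intro i _
      obtain ⟨m, hm, hv⟩ := exists_mem_eq_inf' (hAne i l) (Rf i)
      rw [hv]
      exact le_sup' _ (hsub i hm)
    linarith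
  choose mlo hmloA hmloV using fun i => exists_mem_eq_inf' (hAne i ls) (Rf i)
  choose mhi hmhiA hmhiV using fun i => exists_mem_eq_sup' (hAne i ls) (Rf i)
  have hmloK : ∀ i, mlo i ∈ K i := fun i => hAK i ls (hmloA i)
  have hmhiK : ∀ i, mhi i ∈ K i := fun i => hAK i ls (hmhiA i)
  have hmloD : ∀ i, D i (mlo i) = f i ls - ls * Rf i (mlo i) := by
    intro i; have := hAval i ls _ (hmloA i); linarith
  have hmhiD : ∀ i, D i (mhi i) = f i ls - ls * Rf i (mhi i) := by
    intro i; have := hAval i ls _ (hmhiA i); linarith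
  have hrloeq : rlo ls = ∑ i, Rf i (mlo i) := Finset.sum_congr rfl (fun i _ => hmloV i)
  have hrhieq : rhi ls = ∑ i, Rf i (mhi i) := Finset.sum_congr rfl (fun i _ => hmhiV i)
  set g := -ls * R + ∑ i, f i ls with hgdef
  have hgDu : g ∈ Du := ⟨ls, hls0, rfl⟩
  have hsum1 : ∀ (c : α → ℝ) (i : ι) (m₀ : α), m₀ ∈ K i →
      ∑ m ∈ K i, c m * (if m = m₀ then (1:ℝ) else 0) = c m₀ := by
    intro c i m₀ h
    rw [Finset.sum_congr rfl (fun m _ => by rw [mul_ite, mul_one, mul_zero])]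
    rw [Finset.sum_ite_eq' (K i) m₀ c, if_pos h]
  have hgPr : g ∈ Pr := by
    rcases eq_or_lt_of_le hls0 with h0 | hpos
    · -- ls = 0
      refine ⟨fun i m => if m = mlo i then 1 else 0, ?_, ?_, ?_, ?_⟩
      · intro i m _
        show (0:ℝ) ≤ if m = mlo i then 1 else 0
        split <;> norm_num
      · intro i
        have := hsum1 (fun _ => (1:ℝ)) i (mlo i) (hmloK i)
        simp only [one_mul] at this
        show (∑ m ∈ K i, if m = mlo i then (1:ℝ) else 0) = 1
        exact this
      · have h6 : ∀ i ∈ Finset.univ, ∑ m ∈ K i, Rf i m * (if m = mlo i then (1:ℝ) else 0)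
            = Rf i (mlo i) := fun i _ => hsum1 (Rf i) i (mlo i) (hmloK i)
        show ∑ i, ∑ m ∈ K i, Rf i m * (if m = mlo i then (1:ℝ) else 0) ≤ R
        rw [Finset.sum_congr rfl h6, ← hrloeq]
        exact hmemS
      · have h6 : ∀ i ∈ Finset.univ, ∑ m ∈ K i, D i m * (if m = mlo i then (1:ℝ) else 0)
            = D i (mlo i) := fun i _ => hsum1 (D i) i (mlo i) (hmloK i)
        show g = ∑ i, ∑ m ∈ K i, D i m * (if m = mlo i then (1:ℝ) else 0)
        rw [Finset.sum_congr rfl h6]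
        rw [Finset.sum_congr rfl (fun i _ => hmloD i), Finset.sum_sub_distrib]
        rw [← Finset.mul_sum, hgdef, ← h0]
        ring
    · -- ls > 0
      have hRhi := hhiR hpos
      have hRlo : rlo ls ≤ R := hmemS
      rw [hrloeq] at hRlo
      rw [hrhieq] at hRhi
      set b := ∑ i, Rf i (mlo i) with hbdef
      set c := ∑ i, Rf i (mhi i) with hcdef
      set θ := if b < c then (c - R)/(c - b) else 1 with hθdef
      have hθ0 : 0 ≤ θ := by
        rw [hθdef]; split_ifs with h
        · exact div_nonneg (by linarith) (by linarith)
        · norm_num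
      have hθ1 : θ ≤ 1 := by
        rw [hθdef]; split_ifs with h
        · rw [div_le_one (by linarith)]; linarith
        · exact le_refl 1
      have hθR : θ * b + (1 - θ) * c = R := by
        rw [hθdef]; split_ifs with h
        · have hne : c - b ≠ 0 := ne_of_gt (by linarith)
          have h9 : (c - R)/(c - b) * (c - b) = c - R := div_mul_cancel₀ _ hne
          linear_combination -h9
        · have hcb : c ≤ b := not_lt.1 h
          have : b = R := le_antisymm hRlo (by linarith)
          linarith
      refine ⟨fun i m => θ * (if m = mlo i then 1 else 0)
        + (1 - θ) * (if m = mhi i then 1 else 0), ?_, ?_, ?_, ?_⟩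
      · intro i m _
        show (0:ℝ) ≤ θ * (if m = mlo i then 1 else 0) + (1 - θ) * (if m = mhi i then 1 else 0)
        have h7 : (0:ℝ) ≤ if m = mlo i then (1:ℝ) else 0 := by split <;> norm_num
        have h8 : (0:ℝ) ≤ if m = mhi i then (1:ℝ) else 0 := by split <;> norm_num
        have := mul_nonneg hθ0 h7
        have := mul_nonneg (by linarith : (0:ℝ) ≤ 1 - θ) h8
        linarith
      · intro i
        show (∑ m ∈ K i, (θ * (if m = mlo i then (1:ℝ) else 0)
          + (1 - θ) * (if m = mhi i then 1 else 0))) = 1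
        rw [Finset.sum_add_distrib, ← Finset.mul_sum, ← Finset.mul_sum]
        have e1 := hsum1 (fun _ => (1:ℝ)) i (mlo i) (hmloK i)
        have e2 := hsum1 (fun _ => (1:ℝ)) i (mhi i) (hmhiK i)
        simp only [one_mul] at e1 e2
        rw [e1, e2]; ring
      · have h6 : ∀ i ∈ Finset.univ, ∑ m ∈ K i, Rf i m * (θ * (if m = mlo i then (1:ℝ) else 0)
            + (1 - θ) * (if m = mhi i then 1 else 0))
            = θ * Rf i (mlo i) + (1 - θ) * Rf i (mhi i) := by
          intro i _
          rw [Finset.sum_congr rfl (fun m _ => by ring_nf : ∀ m ∈ K i,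
            Rf i m * (θ * (if m = mlo i then (1:ℝ) else 0)
              + (1 - θ) * (if m = mhi i then 1 else 0))
            = θ * (Rf i m * (if m = mlo i then (1:ℝ) else 0))
              + (1 - θ) * (Rf i m * (if m = mhi i then 1 else 0)))]
          rw [Finset.sum_add_distrib, ← Finset.mul_sum, ← Finset.mul_sum]
          rw [hsum1 (Rf i) i (mlo i) (hmloK i), hsum1 (Rf i) i (mhi i) (hmhiK i)]
        show ∑ i, ∑ m ∈ K i, Rf i m * (θ * (if m = mlo i then (1:ℝ) else 0)
          + (1 - θ) * (if m = mhi i then 1 else 0)) ≤ R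
        rw [Finset.sum_congr rfl h6, Finset.sum_add_distrib, ← Finset.mul_sum, ← Finset.mul_sum]
        rw [← hbdef, ← hcdef, hθR]
      · have h6 : ∀ i ∈ Finset.univ, ∑ m ∈ K i, D i m * (θ * (if m = mlo i then (1:ℝ) else 0)
            + (1 - θ) * (if m = mhi i then 1 else 0))
            = θ * D i (mlo i) + (1 - θ) * D i (mhi i) := by
          intro i _
          rw [Finset.sum_congr rfl (fun m _ => by ring_nf : ∀ m ∈ K i,
            D i m * (θ * (if m = mlo i then (1:ℝ) else 0)
              + (1 - θ) * (if m = mhi i then 1 else 0))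
            = θ * (D i m * (if m = mlo i then (1:ℝ) else 0))
              + (1 - θ) * (D i m * (if m = mhi i then 1 else 0)))]
          rw [Finset.sum_add_distrib, ← Finset.mul_sum, ← Finset.mul_sum]
          rw [hsum1 (D i) i (mlo i) (hmloK i), hsum1 (D i) i (mhi i) (hmhiK i)]
        show g = ∑ i, ∑ m ∈ K i, D i m * (θ * (if m = mlo i then (1:ℝ) else 0)
          + (1 - θ) * (if m = mhi i then 1 else 0))
        rw [Finset.sum_congr rfl h6]
        have h7 : ∑ i, (θ * D i (mlo i) + (1 - θ) * D i (mhi i))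
            = ∑ i, f i ls - ls * (θ * b + (1 - θ) * c) := by
          rw [Finset.sum_congr rfl (fun i _ => by rw [hmloD i, hmhiD i]; ring : ∀ i ∈ Finset.univ,
            θ * D i (mlo i) + (1 - θ) * D i (mhi i)
            = f i ls - ls * (θ * Rf i (mlo i) + (1 - θ) * Rf i (mhi i)))]
          rw [Finset.sum_sub_distrib, ← Finset.mul_sum, Finset.sum_add_distrib,
            ← Finset.mul_sum, ← Finset.mul_sum, ← hbdef, ← hcdef]
        rw [h7, hθR, hgdef]
        ring
  -- weak duality
  have hweak : ∀ a ∈ Pr, ∀ v ∈ Du, v ≤ a := by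
    rintro a ⟨p, hp0, hp1, hpR, rfl⟩ v ⟨l, hl0, rfl⟩
    have h1 : ∀ i, f i l ≤ ∑ m ∈ K i, (D i m + l * Rf i m) * p i m := by
      intro i
      calc f i l = ∑ m ∈ K i, f i l * p i m := by
            rw [← Finset.mul_sum, hp1 i, mul_one]
        _ ≤ ∑ m ∈ K i, (D i m + l * Rf i m) * p i m := by
            apply Finset.sum_le_sum
            intro m hm
            exact mul_le_mul_of_nonneg_right (hfle i l m hm) (hp0 i m hm)
    have h2 : ∑ i, f i l ≤ ∑ i, ∑ m ∈ K i, (D i m + l * Rf i m) * p i m :=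
      Finset.sum_le_sum (fun i _ => h1 i)
    have h3 : ∑ i, ∑ m ∈ K i, (D i m + l * Rf i m) * p i m
        = (∑ i, ∑ m ∈ K i, D i m * p i m) + l * ∑ i, ∑ m ∈ K i, Rf i m * p i m := by
      rw [Finset.mul_sum, ← Finset.sum_add_distrib]
      apply Finset.sum_congr rfl
      intro i _
      rw [Finset.mul_sum, ← Finset.sum_add_distrib]
      apply Finset.sum_congr rfl
      intro m _
      ring
    have h4 : l * (∑ i, ∑ m ∈ K i, Rf i m * p i m) ≤ l * R :=
      mul_le_mul_of_nonneg_left hpR hl0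
    rw [h3] at h2
    linarith
  have hPbdd : BddBelow Pr := ⟨g, fun a ha => hweak a ha g hgDu⟩
  have hDbdd : BddAbove Du := ⟨g, fun v hv => hweak g hgPr v hv⟩
  apply le_antisymm
  · exact le_trans (csInf_le hPbdd hgPr) (le_csSup hDbdd hgDu)
  · exact csSup_le ⟨g, hgDu⟩ (fun v hv => le_csInf ⟨g, hgPr⟩ (fun a ha => hweak a ha v hv))

/-- Theorem 2 (conditional query-aware dual LP): fix `q` with `P_Q(q) > 0` and
let `D^q_{x,m} = Σ_y P_{XY|Q}(x,y|q) d(y, LLM(m,q))` and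
`R^q_{x,m} = P_{X|Q}(x|q)·len(m)/len(x)`. If
`R ≥ Σ_{x∈𝒳} min_{m∈ℳ_x} R^q_{x,m}`, then the conditional query-aware
distortion-rate function satisfies
`D*_q(R) = sup_{λ ≥ 0} (-λR + Σ_{x∈𝒳} min_{m∈ℳ_x} (D^q_{x,m} + λ R^q_{x,m}))`. -/
theorem conditional_query_aware_dual_LP
    (V Q Y O : Type) [Fintype V] [Nonempty V]
    [Fintype Q] [Nonempty Q] [Fintype Y] [Nonempty Y]
    (𝒳 : Finset (List V)) (h𝒳ne : 𝒳.Nonempty) (h𝒳 : ∀ x ∈ 𝒳, x ≠ [])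
    (M : List V → Finset (List V))
    (hM : ∀ x m, m ∈ M x ↔
        m ≠ [] ∧ m.length ≤ x.length ∧ (m.length = x.length → m = x))
    (hMne : ∀ x ∈ 𝒳, (M x).Nonempty)
    (P : List V → Q → Y → ℝ)
    (hP0 : ∀ x q y, 0 ≤ P x q y)
    (hP1 : ∑ x ∈ 𝒳, ∑ q : Q, ∑ y : Y, P x q y = 1)
    (LLM : List V → Q → O)
    (d : Y → O → ℝ) (hd : ∀ y p, 0 ≤ d y p)
    (q : Q) (hq : 0 < ∑ x ∈ 𝒳, ∑ y : Y, P x q y)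
    (Dq Rq : List V → List V → ℝ)
    (hDq : ∀ x m, Dq x m = ∑ y : Y,
        (P x q y / (∑ x' ∈ 𝒳, ∑ y' : Y, P x' q y')) * d y (LLM m q))
    (hRq : ∀ x m, Rq x m =
        ((∑ y : Y, P x q y) / (∑ x' ∈ 𝒳, ∑ y : Y, P x' q y)) *
          ((m.length : ℝ) / (x.length : ℝ)))
    (R : ℝ)
    (hR : R ≥ ∑ x ∈ 𝒳.attach, (M x.1).inf' (hMne x.1 x.2) (fun m => Rq x.1 m)) :
    sInf { v : ℝ | ∃ p : List V → List V → ℝ,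
        (∀ x ∈ 𝒳, ∀ m, 0 ≤ p x m) ∧
        (∀ x ∈ 𝒳, ∑ m ∈ M x, p x m = 1) ∧
        (∀ x ∈ 𝒳, ∀ m, m ∉ M x → p x m = 0) ∧
        (∑ x ∈ 𝒳, ∑ m ∈ M x, Rq x m * p x m ≤ R) ∧
        v = ∑ x ∈ 𝒳, ∑ m ∈ M x, Dq x m * p x m } =
    sSup { v : ℝ | ∃ l : ℝ, 0 ≤ l ∧
        v = -l * R + ∑ x ∈ 𝒳.attach,
          (M x.1).inf' (hMne x.1 x.2) (fun m => Dq x.1 m + l * Rq x.1 m) } := by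
  classical
  have hnesub : Nonempty {x // x ∈ 𝒳} := by
    obtain ⟨x, hx⟩ := h𝒳ne; exact ⟨⟨x, hx⟩⟩
  have key := dual_LP_aux (ι := {x // x ∈ 𝒳}) (α := List V)
    (fun i => M i.1) (fun i => hMne i.1 i.2)
    (fun i m => Dq i.1 m) (fun i m => Rq i.1 m) R
    (by rw [Finset.univ_eq_attach]; exact hR)
  have hDset : { v : ℝ | ∃ l : ℝ, 0 ≤ l ∧
        v = -l * R + ∑ x ∈ 𝒳.attach,
          (M x.1).inf' (hMne x.1 x.2) (fun m => Dq x.1 m + l * Rq x.1 m) } =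
      { v : ℝ | ∃ l : ℝ, 0 ≤ l ∧
        v = -l * R + ∑ i : {x // x ∈ 𝒳},
          (M i.1).inf' (hMne i.1 i.2) (fun m => Dq i.1 m + l * Rq i.1 m) } := by
    ext v
    constructor <;> rintro ⟨l, hl, rfl⟩ <;> exact ⟨l, hl, by rw [Finset.univ_eq_attach]⟩
  have hPset : { v : ℝ | ∃ p : List V → List V → ℝ,
        (∀ x ∈ 𝒳, ∀ m, 0 ≤ p x m) ∧
        (∀ x ∈ 𝒳, ∑ m ∈ M x, p x m = 1) ∧
        (∀ x ∈ 𝒳, ∀ m, m ∉ M x → p x m = 0) ∧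
        (∑ x ∈ 𝒳, ∑ m ∈ M x, Rq x m * p x m ≤ R) ∧
        v = ∑ x ∈ 𝒳, ∑ m ∈ M x, Dq x m * p x m } =
      { v : ℝ | ∃ p : {x // x ∈ 𝒳} → List V → ℝ,
        (∀ i, ∀ m ∈ M i.1, 0 ≤ p i m) ∧
        (∀ i, ∑ m ∈ M i.1, p i m = 1) ∧
        (∑ i : {x // x ∈ 𝒳}, ∑ m ∈ M i.1, Rq i.1 m * p i m ≤ R) ∧
        v = ∑ i : {x // x ∈ 𝒳}, ∑ m ∈ M i.1, Dq i.1 m * p i m } := by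
    ext v
    constructor
    · rintro ⟨p, h0, h1, _, hrate, rfl⟩
      refine ⟨fun i m => p i.1 m, fun i m _ => h0 i.1 i.2 m, fun i => h1 i.1 i.2, ?_, ?_⟩
      · rw [Finset.univ_eq_attach,
          Finset.sum_attach 𝒳 (fun x => ∑ m ∈ M x, Rq x m * p x m)]
        exact hrate
      · rw [Finset.univ_eq_attach,
          Finset.sum_attach 𝒳 (fun x => ∑ m ∈ M x, Dq x m * p x m)]
    · rintro ⟨p, h0, h1, hrate, rfl⟩
      refine ⟨fun x m => if hx : x ∈ 𝒳 then (if m ∈ M x then p ⟨x, hx⟩ m else 0) else 0,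
        ?_, ?_, ?_, ?_, ?_⟩
      · intro x hx m
        try dsimp only
        rw [dif_pos hx]
        split
        · exact h0 ⟨x, hx⟩ m (by assumption)
        · exact le_refl 0
      · intro x hx
        try dsimp only
        rw [Finset.sum_congr rfl (fun m hm => by rw [dif_pos hx, if_pos hm])]
        exact h1 ⟨x, hx⟩
      · intro x hx m hm
        try dsimp only
        rw [dif_pos hx, if_neg hm]
      · rw [← Finset.sum_attach 𝒳 (fun x => ∑ m ∈ M x, Rq x m *
          (if hx : x ∈ 𝒳 then (if m ∈ M x then p ⟨x, hx⟩ m else 0) else 0))]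
        rw [Finset.univ_eq_attach] at hrate
        refine le_trans (le_of_eq ?_) hrate
        apply Finset.sum_congr rfl
        intro i _
        apply Finset.sum_congr rfl
        intro m hm
        rw [dif_pos i.2, if_pos hm]
      · rw [← Finset.sum_attach 𝒳 (fun x => ∑ m ∈ M x, Dq x m *
          (if hx : x ∈ 𝒳 then (if m ∈ M x then p ⟨x, hx⟩ m else 0) else 0))]
        rw [Finset.univ_eq_attach]
        apply Finset.sum_congr rfl
        intro i _
        apply Finset.sum_congr rfl
        intro m hm
        rw [dif_pos i.2, if_pos hm]
  rw [hPset, hDset]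
  exact key
end

section
/- (Theorem 2, average query-aware dual LP) Define D̄^q_{x,m} := Σ_{y∈𝒴} P(x,q,y) d(y, LLM(m,q)) and R̄^q_{x,m} := P_{XQ}(x,q)·len(m)/len(x), and let R ∈ ℝ satisfy R ≥ Σ_{(x,q)∈𝒳×𝒬} min_{m∈ℳ_x} R̄^q_{x,m}. Then the average query-aware distortion-rate function satisfies D̄*(R) = sup_{λ ≥ 0} ( −λR + Σ_{(x,q)∈𝒳×𝒬} min_{m∈ℳ_x} (D̄^q_{x,m} + λ R̄^q_{x,m}) ). -/
theorem sum_pt {μ : Type} [DecidableEq μ] (K : Finset μ) {a : μ} (ha : a ∈ K) (f : μ → ℝ) :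
    ∑ m ∈ K, f m * (if m = a then (1:ℝ) else 0) = f a := by
  rw [Finset.sum_eq_single a]
  · simp
  · intro b _ hb; simp [hb]
  · intro h; exact absurd ha h

theorem sum_two {μ : Type} [DecidableEq μ] (K : Finset μ) {a b : μ} (ha : a ∈ K) (hb : b ∈ K)
    (θ : ℝ) (f : μ → ℝ) :
    ∑ m ∈ K, f m * (θ * (if m = a then (1:ℝ) else 0) + (1-θ) * (if m = b then (1:ℝ) else 0))
      = θ * f a + (1-θ) * f b := by
  have e : ∀ m, f m * (θ * (if m = a then (1:ℝ) else 0) + (1-θ) * (if m = b then (1:ℝ) else 0))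
      = θ * (f m * (if m = a then (1:ℝ) else 0)) + (1-θ) * (f m * (if m = b then (1:ℝ) else 0)) := by
    intro m; ring
  simp only [e]
  rw [Finset.sum_add_distrib, ← Finset.mul_sum, ← Finset.mul_sum, sum_pt K ha f, sum_pt K hb f]

set_option maxHeartbeats 2000000 in
theorem lp_dual {ι μ : Type} [Fintype ι] [DecidableEq μ] (K : ι → Finset μ)
    (hK : ∀ i, (K i).Nonempty)
    (D Rb : ι → μ → ℝ) (hRb : ∀ i m, m ∈ K i → 0 ≤ Rb i m)
    (R : ℝ) (hR : ∑ i, (K i).inf' (hK i) (Rb i) ≤ R) :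
    sInf {v : ℝ | ∃ p : ι → μ → ℝ, (∀ i m, 0 ≤ p i m) ∧ (∀ i, ∑ m ∈ K i, p i m = 1) ∧
        (∑ i, ∑ m ∈ K i, Rb i m * p i m ≤ R) ∧ v = ∑ i, ∑ m ∈ K i, D i m * p i m} =
    sSup {v : ℝ | ∃ l : ℝ, 0 ≤ l ∧
        v = -l * R + ∑ i, (K i).inf' (hK i) (fun m => D i m + l * Rb i m)} := by
  classical
  obtain ⟨g, hg⟩ : ∃ g : ℝ → ℝ, ∀ l,
      g l = -l * R + ∑ i, (K i).inf' (hK i) (fun m => D i m + l * Rb i m) :=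
    ⟨_, fun _ => rfl⟩
  have hDeq : {v : ℝ | ∃ l : ℝ, 0 ≤ l ∧
      v = -l * R + ∑ i, (K i).inf' (hK i) (fun m => D i m + l * Rb i m)}
      = {v : ℝ | ∃ l : ℝ, 0 ≤ l ∧ v = g l} := by
    ext v; constructor
    · rintro ⟨l, hl, rfl⟩; exact ⟨l, hl, (hg l).symm⟩
    · rintro ⟨l, hl, rfl⟩; exact ⟨l, hl, hg l⟩
  rw [hDeq]
  set Pset : Set ℝ := {v : ℝ | ∃ p : ι → μ → ℝ, (∀ i m, 0 ≤ p i m) ∧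
      (∀ i, ∑ m ∈ K i, p i m = 1) ∧
      (∑ i, ∑ m ∈ K i, Rb i m * p i m ≤ R) ∧ v = ∑ i, ∑ m ∈ K i, D i m * p i m} with hPset
  set Dset : Set ℝ := {v : ℝ | ∃ l : ℝ, 0 ≤ l ∧ v = g l} with hDset
  -- weak duality
  have weak : ∀ l, 0 ≤ l → ∀ v ∈ Pset, g l ≤ v := by
    rintro l hl v ⟨p, hp0, hp1, hpr, rfl⟩
    have key : ∀ i, (K i).inf' (hK i) (fun m => D i m + l * Rb i m)
        ≤ ∑ m ∈ K i, (D i m + l * Rb i m) * p i m := by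
      intro i
      calc (K i).inf' (hK i) (fun m => D i m + l * Rb i m)
          = ∑ m ∈ K i, (K i).inf' (hK i) (fun m => D i m + l * Rb i m) * p i m := by
            rw [← Finset.mul_sum, hp1 i, mul_one]
        _ ≤ ∑ m ∈ K i, (D i m + l * Rb i m) * p i m := by
            apply Finset.sum_le_sum
            intro m hm
            exact mul_le_mul_of_nonneg_right (Finset.inf'_le _ hm) (hp0 i m)
    have hsum : ∑ i, ∑ m ∈ K i, (D i m + l * Rb i m) * p i m
        = (∑ i, ∑ m ∈ K i, D i m * p i m) + l * ∑ i, ∑ m ∈ K i, Rb i m * p i m := by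
      rw [Finset.mul_sum, ← Finset.sum_add_distrib]
      refine Finset.sum_congr rfl fun i _ => ?_
      rw [Finset.mul_sum, ← Finset.sum_add_distrib]
      refine Finset.sum_congr rfl fun m _ => ?_
      ring
    have h1 : ∑ i, (K i).inf' (hK i) (fun m => D i m + l * Rb i m)
        ≤ (∑ i, ∑ m ∈ K i, D i m * p i m) + l * ∑ i, ∑ m ∈ K i, Rb i m * p i m := by
      rw [← hsum]; exact Finset.sum_le_sum fun i _ => key i
    have h2 : l * ∑ i, ∑ m ∈ K i, Rb i m * p i m ≤ l * R :=
      mul_le_mul_of_nonneg_left hpr hl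
    rw [hg l]
    linarith
  have hPne : Pset.Nonempty := by
    choose a ha hva using fun i => Finset.exists_mem_eq_inf' (hK i) (Rb i)
    refine ⟨∑ i, D i (a i), fun i m => if m = a i then (1:ℝ) else 0, ?_, ?_, ?_, ?_⟩
    · intro i m; beta_reduce; split <;> norm_num
    · intro i
      have := sum_pt (K i) (ha i) (fun _ => (1:ℝ))
      simpa using this
    · have he : ∀ i, ∑ m ∈ K i, Rb i m * (if m = a i then (1:ℝ) else 0) = Rb i (a i) :=
        fun i => sum_pt (K i) (ha i) (Rb i)
      simp only [he]
      calc ∑ i, Rb i (a i) = ∑ i, (K i).inf' (hK i) (Rb i) :=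
            Finset.sum_congr rfl fun i _ => (hva i).symm
        _ ≤ R := hR
    · exact (Finset.sum_congr rfl fun i _ => (sum_pt (K i) (ha i) (D i)).symm)
  have hDne : Dset.Nonempty := ⟨g 0, 0, le_rfl, rfl⟩
  obtain ⟨v0, hv0⟩ := hPne
  have hDbdd : BddAbove Dset := ⟨v0, by rintro w ⟨l, hl, rfl⟩; exact weak l hl v0 hv0⟩
  have hPbdd : BddBelow Pset := ⟨g 0, fun v hv => weak 0 le_rfl v hv⟩
  obtain ⟨s, hs⟩ : ∃ s : ℝ, s = sSup Dset := ⟨_, rfl⟩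
  have hgmem : ∀ l, 0 ≤ l → g l ≤ s := fun l hl => hs ▸ le_csSup hDbdd ⟨l, hl, rfl⟩
  -- bounds on Rb
  obtain ⟨S, hSdef⟩ : ∃ S : ℝ, S = ∑ i, (K i).sup' (hK i) (Rb i) := ⟨_, rfl⟩
  have hsup0 : ∀ i, 0 ≤ (K i).sup' (hK i) (Rb i) := by
    intro i
    obtain ⟨m, hm⟩ := hK i
    exact le_trans (hRb i m hm) (Finset.le_sup' _ hm)
  have hS0 : 0 ≤ S := hSdef ▸ Finset.sum_nonneg fun i _ => hsup0 i
  have hSbound : ∀ i m, m ∈ K i → Rb i m ≤ S := by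
    intro i m hm
    rw [hSdef]
    calc Rb i m ≤ (K i).sup' (hK i) (Rb i) := Finset.le_sup' _ hm
      _ ≤ ∑ i, (K i).sup' (hK i) (Rb i) :=
          Finset.single_le_sum (fun j _ => hsup0 j) (Finset.mem_univ i)
  obtain ⟨L, hLdef⟩ : ∃ L : ℝ, L = |R| + S := ⟨_, rfl⟩
  have hL0 : 0 ≤ L := hLdef ▸ add_nonneg (abs_nonneg _) hS0
  have hLip : ∀ x y : ℝ, g y - L * |x - y| ≤ g x := by
    intro x y
    have hterm : ∀ i, (K i).inf' (hK i) (fun m => D i m + y * Rb i m)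
        - |x - y| * (K i).sup' (hK i) (Rb i)
        ≤ (K i).inf' (hK i) (fun m => D i m + x * Rb i m) := by
      intro i
      obtain ⟨m, hm, hvm⟩ := Finset.exists_mem_eq_inf' (hK i) (fun m => D i m + x * Rb i m)
      have h1 : (K i).inf' (hK i) (fun m => D i m + y * Rb i m) ≤ D i m + y * Rb i m :=
        Finset.inf'_le _ hm
      have h2 : -(|x - y| * Rb i m) ≤ (x - y) * Rb i m := by
        have := neg_abs_le (x - y)
        nlinarith [hRb i m hm]
      have h3 : |x - y| * Rb i m ≤ |x - y| * (K i).sup' (hK i) (Rb i) :=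
        mul_le_mul_of_nonneg_left (Finset.le_sup' _ hm) (abs_nonneg _)
      have heq : D i m + x * Rb i m = D i m + y * Rb i m + (x - y) * Rb i m := by ring
      rw [hvm, heq]
      linarith
    have hsum : ∑ i, ((K i).inf' (hK i) (fun m => D i m + y * Rb i m)
        - |x - y| * (K i).sup' (hK i) (Rb i))
        ≤ ∑ i, (K i).inf' (hK i) (fun m => D i m + x * Rb i m) :=
      Finset.sum_le_sum fun i _ => hterm i
    rw [Finset.sum_sub_distrib, ← Finset.mul_sum, ← hSdef] at hsum
    have hR2 : (x - y) * R ≤ |x - y| * |R| := by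
      calc (x - y) * R ≤ |(x - y) * R| := le_abs_self _
        _ = |x - y| * |R| := by rw [abs_mul]
    have hLeq : L * |x - y| = |x - y| * |R| + |x - y| * S := by rw [hLdef]; ring
    rw [hg x, hg y]
    linarith
  -- attainment of the dual sup
  have attain : ∃ l : ℝ, 0 ≤ l ∧ g l = s := by
    have hseq : ∀ n : ℕ, ∃ l, 0 ≤ l ∧ s - 1/(n+1) < g l := by
      intro n
      have hpos : (0:ℝ) < 1/(n+1) := by positivity
      have h1 : s - 1/(n+1) < s := by linarith
      rw [hs] at h1
      obtain ⟨w, hw, hlt⟩ := exists_lt_of_lt_csSup hDne h1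
      obtain ⟨l', hl', rfl⟩ := hw
      exact ⟨l', hl', by rw [← hs] at hlt; exact hlt⟩
    choose ln hln hgln using hseq
    have hsel : ∀ (n : ℕ) (i : ι), ∃ m : {m // m ∈ K i},
        (K i).inf' (hK i) (fun m => D i m + ln n * Rb i m) = D i m.1 + ln n * Rb i m.1 := by
      intro n i
      obtain ⟨m, hm, hvm⟩ := Finset.exists_mem_eq_inf' (hK i) (fun m => D i m + ln n * Rb i m)
      exact ⟨⟨m, hm⟩, hvm⟩
    choose σ hσ using hsel
    obtain ⟨σb, hfibinf⟩ := Finite.exists_infinite_fiber (σ : ℕ → ∀ i, {m // m ∈ K i})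
    have hfib : (σ ⁻¹' {σb}).Infinite := Set.infinite_coe_iff.mp hfibinf
    obtain ⟨A, hA⟩ : ∃ A : ℝ, A = ∑ i, D i (σb i).1 := ⟨_, rfl⟩
    obtain ⟨B, hB⟩ : ∃ B : ℝ, B = ∑ i, Rb i (σb i).1 - R := ⟨_, rfl⟩
    have hF : ∀ n, σ n = σb → g (ln n) = A + B * ln n := by
      intro n hn
      have hh : ∑ i, (K i).inf' (hK i) (fun m => D i m + ln n * Rb i m)
          = ∑ i, (D i (σb i).1 + ln n * Rb i (σb i).1) := by
        refine Finset.sum_congr rfl fun i _ => ?_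
        rw [hσ n i, hn]
      rw [hg (ln n), hh, Finset.sum_add_distrib, ← Finset.mul_sum, hA, hB]
      ring
    rcases eq_or_ne B 0 with hB0 | hB0
    · -- constant case
      obtain ⟨n₀, hn₀⟩ := hfib.nonempty
      have hn₀' : σ n₀ = σb := hn₀
      have hgA : g (ln n₀) = A := by rw [hF n₀ hn₀', hB0, zero_mul, add_zero]
      have hAle : A ≤ s := hgA ▸ hgmem _ (hln n₀)
      have hAge : s ≤ A := by
        by_contra h
        push_neg at h
        obtain ⟨n₁, hn₁⟩ := exists_nat_one_div_lt (sub_pos.2 h)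
        obtain ⟨n₂, hn₂mem, hn₂gt⟩ := hfib.exists_gt n₁
        have hg2 : g (ln n₂) = A := by
          rw [hF n₂ hn₂mem, hB0, zero_mul, add_zero]
        have h2 := hgln n₂
        rw [hg2] at h2
        have hmono : (1:ℝ)/(n₂+1) ≤ 1/(n₁+1) := by
          apply one_div_le_one_div_of_le
          · positivity
          · exact_mod_cast by linarith [hn₂gt]
        linarith
      exact ⟨ln n₀, hln n₀, by rw [hgA]; linarith⟩
    · -- sloped case
      have hBpos : 0 < |B| := abs_pos.2 hB0
      obtain ⟨lstar, hlstar⟩ : ∃ l : ℝ, l = (s - A) / B := ⟨_, rfl⟩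
      have hdist : ∀ n, σ n = σb → |ln n - lstar| ≤ 1/((n+1) * |B|) := by
        intro n hn
        have h1 : g (ln n) ≤ s := hgmem _ (hln n)
        have h2 := hgln n
        have hfn := hF n hn
        have hpos : (0:ℝ) < 1/(n+1) := by positivity
        have habs : |g (ln n) - s| ≤ 1/(n+1) := abs_le.mpr ⟨by linarith, by linarith⟩
        have hdiff : ln n - lstar = (g (ln n) - s) / B := by
          rw [hlstar, hfn]
          field_simp
          ring
        rw [hdiff, abs_div, div_le_iff₀ hBpos]
        have heq : 1/(((n:ℝ)+1) * |B|) * |B| = 1/((n:ℝ)+1) := by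
          field_simp
          try ring
        rw [heq]
        exact habs
      have hl0' : 0 ≤ lstar := by
        by_contra h
        push_neg at h
        obtain ⟨n₁, hn₁⟩ := exists_nat_one_div_lt (show (0:ℝ) < -lstar * |B| by nlinarith)
        obtain ⟨n₂, hn₂mem, hn₂gt⟩ := hfib.exists_gt n₁
        have hd := hdist n₂ hn₂mem
        have h3 : -lstar ≤ |ln n₂ - lstar| := by
          have h4 := hln n₂
          have h5 := le_abs_self (ln n₂ - lstar)
          linarith
        have hmono : (1:ℝ)/(((n₂:ℝ)+1) * |B|) ≤ 1/(((n₁:ℝ)+1)*|B|) := by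
          apply one_div_le_one_div_of_le
          · positivity
          · have hc : (n₁:ℝ) + 1 ≤ (n₂:ℝ)+1 := by exact_mod_cast by linarith [hn₂gt]
            nlinarith
        have hp1 : (0:ℝ) < (n₁:ℝ)+1 := by positivity
        rw [div_lt_iff₀ hp1] at hn₁
        have h4 : 1/(((n₁:ℝ)+1)*|B|) < -lstar := by
          rw [div_lt_iff₀ (by positivity)]
          nlinarith
        linarith
      have hge : s ≤ g lstar := by
        by_contra h
        push_neg at h
        obtain ⟨C, hC⟩ : ∃ C : ℝ, C = 1 + L / |B| := ⟨_, rfl⟩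
        have hCpos : 0 < C := by rw [hC]; positivity
        have hC0 : 0 < (s - g lstar)/C := div_pos (by linarith) hCpos
        obtain ⟨n₁, hn₁⟩ := exists_nat_one_div_lt hC0
        obtain ⟨n₂, hn₂mem, hn₂gt⟩ := hfib.exists_gt n₁
        have hlip := hLip lstar (ln n₂)
        have hd := hdist n₂ hn₂mem
        have h2 := hgln n₂
        have habs : |lstar - ln n₂| = |ln n₂ - lstar| := abs_sub_comm _ _
        have h5 : L * |lstar - ln n₂| ≤ L * (1/(((n₂:ℝ)+1)*|B|)) := by
          rw [habs]; exact mul_le_mul_of_nonneg_left hd hL0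
        have h6 : 1/((n₂:ℝ)+1) + L * (1/(((n₂:ℝ)+1)*|B|)) = (1/((n₂:ℝ)+1)) * C := by
          rw [hC]
          field_simp
          try ring
        have h7 : s - g lstar < (1/((n₂:ℝ)+1)) * C := by
          rw [← h6]; linarith
        have hmono : (1:ℝ)/((n₂:ℝ)+1) ≤ 1/((n₁:ℝ)+1) := by
          apply one_div_le_one_div_of_le
          · positivity
          · exact_mod_cast by linarith [hn₂gt]
        have h8 : (1/((n₁:ℝ)+1)) * C < s - g lstar := (lt_div_iff₀ hCpos).mp hn₁
        have h9 : (1/((n₂:ℝ)+1)) * C ≤ (1/((n₁:ℝ)+1)) * C :=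
          mul_le_mul_of_nonneg_right hmono hCpos.le
        linarith
      exact ⟨lstar, hl0', le_antisymm (hgmem _ hl0') hge⟩
  obtain ⟨l, hl0, hgl⟩ := attain
  -- construct optimal primal solution
  have hmem : s ∈ Pset := by
    obtain ⟨hi, hhi⟩ : ∃ h : ι → ℝ, ∀ i,
        h i = (K i).inf' (hK i) (fun m => D i m + l * Rb i m) := ⟨_, fun _ => rfl⟩
    set Ac : ι → Finset μ := fun i => (K i).filter (fun m => D i m + l * Rb i m ≤ hi i)
      with hAc
    have hAsub : ∀ i, Ac i ⊆ K i := fun i => Finset.filter_subset _ _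
    have hAne : ∀ i, (Ac i).Nonempty := by
      intro i
      obtain ⟨m, hm, hvm⟩ := Finset.exists_mem_eq_inf' (hK i) (fun m => D i m + l * Rb i m)
      exact ⟨m, Finset.mem_filter.2 ⟨hm, by rw [hhi i, hvm]⟩⟩
    have hAeq : ∀ i m, m ∈ Ac i → D i m + l * Rb i m = hi i := by
      intro i m hm
      obtain ⟨hmK, hle⟩ := Finset.mem_filter.1 hm
      have h2 : (K i).inf' (hK i) (fun m => D i m + l * Rb i m) ≤ D i m + l * Rb i m :=
        Finset.inf'_le _ hmK
      rw [← hhi i] at h2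
      exact le_antisymm hle h2
    have hsumhi : ∑ i, hi i = s + l * R := by
      have h1 : g l = -l * R + ∑ i, hi i := by
        rw [hg l]
        exact congrArg _ (Finset.sum_congr rfl fun i _ => (hhi i).symm)
      rw [hgl] at h1
      linarith
    choose a ha hva using fun i => Finset.exists_mem_eq_inf' (hAne i) (Rb i)
    choose b hb hvb using fun i => Finset.exists_mem_eq_sup' (hAne i) (Rb i)
    have haK : ∀ i, a i ∈ K i := fun i => hAsub i (ha i)
    have hbK : ∀ i, b i ∈ K i := fun i => hAsub i (hb i)
    obtain ⟨rlo, hrlo⟩ : ∃ r : ℝ, r = ∑ i, Rb i (a i) := ⟨_, rfl⟩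
    obtain ⟨rhi, hrhi⟩ : ∃ r : ℝ, r = ∑ i, Rb i (b i) := ⟨_, rfl⟩
    -- the strict gap for inactive pairs
    obtain ⟨N, hN⟩ : ∃ N : Finset ((_ : ι) × μ),
        N = (Finset.univ.sigma K).filter (fun z => z.2 ∉ Ac z.1) := ⟨_, rfl⟩
    obtain ⟨δ, hδ⟩ : ∃ δ : ℝ, δ = if hN2 : N.Nonempty then
        N.inf' hN2 (fun z => D z.1 z.2 + l * Rb z.1 z.2 - hi z.1) else 1 := ⟨_, rfl⟩
    have hδpos : 0 < δ := by
      by_cases hN2 : N.Nonempty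
      · rw [hδ, dif_pos hN2, Finset.lt_inf'_iff]
        intro z hz
        rw [hN, Finset.mem_filter] at hz
        obtain ⟨hzK, hzA⟩ := hz
        have hzK2 : z.2 ∈ K z.1 := (Finset.mem_sigma.1 hzK).2
        have hlt : hi z.1 < D z.1 z.2 + l * Rb z.1 z.2 := by
          by_contra hcon
          push_neg at hcon
          exact hzA (Finset.mem_filter.2 ⟨hzK2, hcon⟩)
        linarith
      · rw [hδ, dif_neg hN2]; exact one_pos
    have hgap : ∀ i m, m ∈ K i → m ∉ Ac i → hi i + δ ≤ D i m + l * Rb i m := by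
      intro i m hm hmA
      have hmem2 : (⟨i, m⟩ : Σ _ : ι, μ) ∈ N := by
        rw [hN]
        exact Finset.mem_filter.2 ⟨Finset.mem_sigma.2 ⟨Finset.mem_univ _, hm⟩, hmA⟩
      have hN2 : N.Nonempty := ⟨_, hmem2⟩
      have hle : δ ≤ D i m + l * Rb i m - hi i := by
        rw [hδ, dif_pos hN2]
        exact Finset.inf'_le _ hmem2
      linarith
    have hSpos : (0:ℝ) < 1 + S := by linarith
    -- perturbation 1 : rlo ≤ R
    have hrloR : rlo ≤ R := by
      by_contra hcon
      push_neg at hcon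
      obtain ⟨t, ht⟩ : ∃ t : ℝ, t = δ / (1 + S) := ⟨_, rfl⟩
      have htpos : 0 < t := by rw [ht]; positivity
      have htS : ∀ i m, m ∈ K i → t * Rb i m ≤ δ := by
        intro i m hm
        have h1 : Rb i m ≤ S := hSbound i m hm
        have h2 : t * Rb i m ≤ t * S := mul_le_mul_of_nonneg_left h1 htpos.le
        have h3 : t * S ≤ δ := by
          rw [ht, div_mul_eq_mul_div, div_le_iff₀ hSpos]
          nlinarith
        linarith
      have key : ∀ i, hi i + t * Rb i (a i)
          ≤ (K i).inf' (hK i) (fun m => D i m + (l+t) * Rb i m) := by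
        intro i
        apply Finset.le_inf'
        intro m hm
        by_cases hmA : m ∈ Ac i
        · have he := hAeq i m hmA
          have hRm : Rb i (a i) ≤ Rb i m := by
            rw [← hva i]; exact Finset.inf'_le _ hmA
          nlinarith [mul_nonneg htpos.le (sub_nonneg.2 hRm)]
        · have hg2 := hgap i m hm hmA
          have h0 : 0 ≤ t * Rb i m := mul_nonneg htpos.le (hRb i m hm)
          have h1 := htS i (a i) (haK i)
          nlinarith
      have hsum2 : -(l + t) * R + ∑ i, (hi i + t * Rb i (a i)) ≤ g (l+t) := by
        rw [hg (l+t)]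
        have := Finset.sum_le_sum (fun i (_ : i ∈ Finset.univ) => key i)
        linarith
      have hval : ∑ i, (hi i + t * Rb i (a i)) = (s + l * R) + t * rlo := by
        rw [Finset.sum_add_distrib, ← Finset.mul_sum, hsumhi, ← hrlo]
      have hle2 := hgmem (l+t) (by linarith [htpos.le])
      rw [hval] at hsum2
      nlinarith [mul_pos htpos (sub_pos.2 hcon)]
    -- perturbation 2 : if l > 0 then R ≤ rhi
    have hrhiR : 0 < l → R ≤ rhi := by
      intro hlpos
      by_contra hcon
      push_neg at hcon
      obtain ⟨t, ht⟩ : ∃ t : ℝ, t = min l (δ / (1 + S)) := ⟨_, rfl⟩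
      have htpos : 0 < t := by rw [ht]; exact lt_min hlpos (by positivity)
      have htl : t ≤ l := ht ▸ min_le_left _ _
      have htS : ∀ i m, m ∈ K i → t * Rb i m ≤ δ := by
        intro i m hm
        have h1 : Rb i m ≤ S := hSbound i m hm
        have h2 : t * Rb i m ≤ t * S := mul_le_mul_of_nonneg_left h1 htpos.le
        have h3 : t ≤ δ / (1 + S) := ht ▸ min_le_right _ _
        have h4 : t * S ≤ (δ / (1 + S)) * S := mul_le_mul_of_nonneg_right h3 hS0
        have h5 : (δ / (1 + S)) * S ≤ δ := by
          rw [div_mul_eq_mul_div, div_le_iff₀ hSpos]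
          nlinarith
        linarith
      have key : ∀ i, hi i - t * Rb i (b i)
          ≤ (K i).inf' (hK i) (fun m => D i m + (l-t) * Rb i m) := by
        intro i
        apply Finset.le_inf'
        intro m hm
        by_cases hmA : m ∈ Ac i
        · have he := hAeq i m hmA
          have hRm : Rb i m ≤ Rb i (b i) := by
            rw [← hvb i]; exact Finset.le_sup' _ hmA
          nlinarith [mul_nonneg htpos.le (sub_nonneg.2 hRm)]
        · have hg2 := hgap i m hm hmA
          have h0 := htS i m hm
          have h1 : 0 ≤ Rb i (b i) := hRb i (b i) (hbK i)
          nlinarith [mul_nonneg htpos.le h1]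
      have hsum2 : -(l - t) * R + ∑ i, (hi i - t * Rb i (b i)) ≤ g (l-t) := by
        rw [hg (l-t)]
        have := Finset.sum_le_sum (fun i (_ : i ∈ Finset.univ) => key i)
        linarith
      have hval : ∑ i, (hi i - t * Rb i (b i)) = (s + l * R) - t * rhi := by
        rw [Finset.sum_sub_distrib, ← Finset.mul_sum, hsumhi, ← hrhi]
      have hle2 := hgmem (l-t) (by linarith)
      rw [hval] at hsum2
      nlinarith [mul_pos htpos (sub_pos.2 hcon)]
    -- the mixing weight
    obtain ⟨θ, hθdef⟩ : ∃ θ : ℝ,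
        θ = if l = 0 ∨ rhi ≤ rlo then 1 else (rhi - R)/(rhi - rlo) := ⟨_, rfl⟩
    have hfacts : 0 ≤ θ ∧ θ ≤ 1 ∧ (θ * rlo + (1-θ) * rhi ≤ R) ∧
        l * (R - (θ * rlo + (1-θ) * rhi)) = 0 := by
      rcases eq_or_lt_of_le hl0 with hl | hlpos
      · rw [hθdef, if_pos (Or.inl hl.symm)]
        refine ⟨by norm_num, le_rfl, by linarith, by rw [← hl]; ring⟩
      · by_cases hc : rhi ≤ rlo
        · have hR2 := hrhiR hlpos
          have hEq : rlo = R := le_antisymm hrloR (by linarith)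
          rw [hθdef, if_pos (Or.inr hc)]
          refine ⟨by norm_num, le_rfl, by linarith, by rw [hEq]; ring⟩
        · push_neg at hc
          have hR2 := hrhiR hlpos
          have hd : (0:ℝ) < rhi - rlo := by linarith
          have hne : rhi - rlo ≠ 0 := ne_of_gt hd
          rw [hθdef, if_neg (by push_neg; exact ⟨ne_of_gt hlpos, hc⟩)]
          have hrateR : (rhi - R)/(rhi - rlo) * rlo + (1 - (rhi - R)/(rhi - rlo)) * rhi = R := by
            field_simp
            ring
          refine ⟨div_nonneg (by linarith) hd.le, ?_, le_of_eq hrateR, ?_⟩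
          · rw [div_le_one hd]; linarith
          · rw [hrateR, sub_self, mul_zero]
    obtain ⟨hθ0, hθ1, hrate, hcs⟩ := hfacts
    -- the optimal primal solution
    refine ⟨fun i m => θ * (if m = a i then (1:ℝ) else 0) + (1-θ) * (if m = b i then 1 else 0),
        ?_, ?_, ?_, ?_⟩
    · intro i m
      beta_reduce
      apply add_nonneg <;> apply mul_nonneg
      · exact hθ0
      · split <;> norm_num
      · linarith
      · split <;> norm_num
    · intro i
      have h := sum_two (K i) (haK i) (hbK i) θ (fun _ => (1:ℝ))
      simp only [one_mul] at h
      beta_reduce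
      rw [h]
      ring
    · have h : ∀ i, ∑ m ∈ K i, Rb i m *
          (θ * (if m = a i then (1:ℝ) else 0) + (1-θ) * (if m = b i then 1 else 0))
          = θ * Rb i (a i) + (1-θ) * Rb i (b i) :=
        fun i => sum_two (K i) (haK i) (hbK i) θ (Rb i)
      simp only [h]
      rw [Finset.sum_add_distrib, ← Finset.mul_sum, ← Finset.mul_sum, ← hrlo, ← hrhi]
      exact hrate
    · have h : ∀ i, ∑ m ∈ K i, D i m *
          (θ * (if m = a i then (1:ℝ) else 0) + (1-θ) * (if m = b i then 1 else 0))
          = θ * D i (a i) + (1-θ) * D i (b i) :=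
        fun i => sum_two (K i) (haK i) (hbK i) θ (D i)
      simp only [h]
      have hDa : ∀ i, D i (a i) = hi i - l * Rb i (a i) := by
        intro i; have := hAeq i (a i) (ha i); linarith
      have hDb : ∀ i, D i (b i) = hi i - l * Rb i (b i) := by
        intro i; have := hAeq i (b i) (hb i); linarith
      have e1 : ∀ i, θ * D i (a i) + (1-θ) * D i (b i)
          = hi i - l * (θ * Rb i (a i) + (1-θ) * Rb i (b i)) := by
        intro i; rw [hDa i, hDb i]; ring
      simp only [e1]
      rw [Finset.sum_sub_distrib, ← Finset.mul_sum, Finset.sum_add_distrib,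
        ← Finset.mul_sum, ← Finset.mul_sum, ← hrlo, ← hrhi, hsumhi]
      linarith
  apply le_antisymm
  · calc sInf Pset ≤ s := csInf_le hPbdd hmem
      _ = sSup Dset := hs
  · exact csSup_le hDne fun w hw => le_csInf ⟨v0, hv0⟩ fun u hu => by
      obtain ⟨l', hl', rfl⟩ := hw; exact weak l' hl' u hu

/-- Theorem 2 (average query-aware dual LP): let
`D̄^q_{x,m} = Σ_y P(x,q,y) d(y, LLM(m,q))` and
`R̄^q_{x,m} = P_{XQ}(x,q)·len(m)/len(x)`. If
`R ≥ Σ_{(x,q)∈𝒳×𝒬} min_{m∈ℳ_x} R̄^q_{x,m}`, then the average query-aware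
distortion-rate function satisfies
`D̄*(R) = sup_{λ ≥ 0} (-λR + Σ_{(x,q)∈𝒳×𝒬} min_{m∈ℳ_x} (D̄^q_{x,m} + λ R̄^q_{x,m}))`. -/
theorem average_query_aware_dual_LP
    (V Q Y O : Type) [Fintype V] [Nonempty V]
    [Fintype Q] [Nonempty Q] [Fintype Y] [Nonempty Y]
    (𝒳 : Finset (List V)) (h𝒳ne : 𝒳.Nonempty) (h𝒳 : ∀ x ∈ 𝒳, x ≠ [])
    (M : List V → Finset (List V))
    (hM : ∀ x m, m ∈ M x ↔
        m ≠ [] ∧ m.length ≤ x.length ∧ (m.length = x.length → m = x))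
    (hMne : ∀ x ∈ 𝒳, (M x).Nonempty)
    (P : List V → Q → Y → ℝ)
    (hP0 : ∀ x q y, 0 ≤ P x q y)
    (hP1 : ∑ x ∈ 𝒳, ∑ q : Q, ∑ y : Y, P x q y = 1)
    (LLM : List V → Q → O)
    (d : Y → O → ℝ) (hd : ∀ y p, 0 ≤ d y p)
    (Dbar Rbar : List V → Q → List V → ℝ)
    (hDbar : ∀ x q m, Dbar x q m = ∑ y : Y, P x q y * d y (LLM m q))
    (hRbar : ∀ x q m, Rbar x q m =
        (∑ y : Y, P x q y) * ((m.length : ℝ) / (x.length : ℝ)))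
    (R : ℝ)
    (hR : R ≥ ∑ x ∈ 𝒳.attach, ∑ q : Q,
        (M x.1).inf' (hMne x.1 x.2) (fun m => Rbar x.1 q m)) :
    sInf { v : ℝ | ∃ p : List V → Q → List V → ℝ,
        (∀ x ∈ 𝒳, ∀ q : Q, ∀ m, 0 ≤ p x q m) ∧
        (∀ x ∈ 𝒳, ∀ q : Q, ∑ m ∈ M x, p x q m = 1) ∧
        (∀ x ∈ 𝒳, ∀ q : Q, ∀ m, m ∉ M x → p x q m = 0) ∧
        (∑ x ∈ 𝒳, ∑ q : Q, ∑ m ∈ M x, Rbar x q m * p x q m ≤ R) ∧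
        v = ∑ x ∈ 𝒳, ∑ q : Q, ∑ m ∈ M x, Dbar x q m * p x q m } =
    sSup { v : ℝ | ∃ l : ℝ, 0 ≤ l ∧
        v = -l * R + ∑ x ∈ 𝒳.attach, ∑ q : Q,
          (M x.1).inf' (hMne x.1 x.2)
            (fun m => Dbar x.1 q m + l * Rbar x.1 q m) } := by
  classical
  set K : {x // x ∈ 𝒳} × Q → Finset (List V) := fun i => M i.1.1 with hKdef
  have hK : ∀ i, (K i).Nonempty := fun i => hMne i.1.1 i.1.2
  set D : {x // x ∈ 𝒳} × Q → List V → ℝ := fun i m => Dbar i.1.1 i.2 m with hDdef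
  set Rb : {x // x ∈ 𝒳} × Q → List V → ℝ := fun i m => Rbar i.1.1 i.2 m with hRbdef
  have hRb : ∀ i m, m ∈ K i → 0 ≤ Rb i m := by
    intro i m _
    show 0 ≤ Rbar i.1.1 i.2 m
    rw [hRbar]
    apply mul_nonneg (Finset.sum_nonneg fun y _ => hP0 _ _ y)
    exact div_nonneg (Nat.cast_nonneg _) (Nat.cast_nonneg _)
  -- sum conversions
  have hconv : ∀ f : {x // x ∈ 𝒳} → Q → ℝ,
      ∑ i : {x // x ∈ 𝒳} × Q, f i.1 i.2 = ∑ x ∈ 𝒳.attach, ∑ q : Q, f x q := by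
    intro f
    rw [Fintype.sum_prod_type, Finset.univ_eq_attach]
  have hattach : ∀ F : List V → Q → ℝ,
      (∑ x ∈ 𝒳, ∑ q : Q, F x q) = ∑ x ∈ 𝒳.attach, ∑ q : Q, F x.1 q :=
    fun F => (Finset.sum_attach 𝒳 (fun x => ∑ q : Q, F x q)).symm
  have hR' : ∑ i, (K i).inf' (hK i) (Rb i) ≤ R := by
    refine le_trans (le_of_eq ?_) (ge_iff_le.mp hR)
    exact hconv (fun x q => (M x.1).inf' (hMne x.1 x.2) (fun m => Rbar x.1 q m))
  have hmain := lp_dual K hK D Rb hRb R hR'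
  -- identify the primal sets
  have hPeq : { v : ℝ | ∃ p : List V → Q → List V → ℝ,
        (∀ x ∈ 𝒳, ∀ q : Q, ∀ m, 0 ≤ p x q m) ∧
        (∀ x ∈ 𝒳, ∀ q : Q, ∑ m ∈ M x, p x q m = 1) ∧
        (∀ x ∈ 𝒳, ∀ q : Q, ∀ m, m ∉ M x → p x q m = 0) ∧
        (∑ x ∈ 𝒳, ∑ q : Q, ∑ m ∈ M x, Rbar x q m * p x q m ≤ R) ∧
        v = ∑ x ∈ 𝒳, ∑ q : Q, ∑ m ∈ M x, Dbar x q m * p x q m } =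
      {v : ℝ | ∃ p : {x // x ∈ 𝒳} × Q → List V → ℝ,
        (∀ i m, 0 ≤ p i m) ∧ (∀ i, ∑ m ∈ K i, p i m = 1) ∧
        (∑ i, ∑ m ∈ K i, Rb i m * p i m ≤ R) ∧
        v = ∑ i, ∑ m ∈ K i, D i m * p i m} := by
    ext v
    simp only [Set.mem_setOf_eq]
    constructor
    · rintro ⟨p, h0, h1, hz, hr, hv⟩
      refine ⟨fun i m => p i.1.1 i.2 m, fun i m => h0 i.1.1 i.1.2 i.2 m,
        fun i => h1 i.1.1 i.1.2 i.2, ?_, ?_⟩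
      · have e : ∑ i : {x // x ∈ 𝒳} × Q, ∑ m ∈ K i, Rb i m * p i.1.1 i.2 m
            = ∑ x ∈ 𝒳, ∑ q : Q, ∑ m ∈ M x, Rbar x q m * p x q m := by
          rw [hattach (fun x q => ∑ m ∈ M x, Rbar x q m * p x q m)]
          exact hconv (fun x q => ∑ m ∈ M x.1, Rbar x.1 q m * p x.1 q m)
        rw [e]; exact hr
      · rw [hv]
        rw [hattach (fun x q => ∑ m ∈ M x, Dbar x q m * p x q m)]
        exact (hconv (fun x q => ∑ m ∈ M x.1, Dbar x.1 q m * p x.1 q m)).symm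
    · rintro ⟨p, h0, h1, hr, hv⟩
      refine ⟨fun x q m => if hx : x ∈ 𝒳 then
          (if m ∈ M x then p (⟨x, hx⟩, q) m else 0) else 0, ?_, ?_, ?_, ?_, ?_⟩
      · intro x hx q m
        beta_reduce
        rw [dif_pos hx]
        split
        · exact h0 _ _
        · exact le_rfl
      · intro x hx q
        calc ∑ m ∈ M x, (if hx : x ∈ 𝒳 then
              (if m ∈ M x then p (⟨x, hx⟩, q) m else 0) else 0)
            = ∑ m ∈ M x, p (⟨x, hx⟩, q) m := by
              refine Finset.sum_congr rfl fun m hm => ?_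
              rw [dif_pos hx, if_pos hm]
          _ = 1 := h1 (⟨x, hx⟩, q)
      · intro x hx q m hm
        beta_reduce
        rw [dif_pos hx, if_neg hm]
      · have e : ∀ (x : {x // x ∈ 𝒳}) (q : Q) (G : List V → ℝ),
            (∑ m ∈ M x.1, G m * (if hx : x.1 ∈ 𝒳 then
              (if m ∈ M x.1 then p (⟨x.1, hx⟩, q) m else 0) else 0))
            = ∑ m ∈ K (x, q), G m * p (x, q) m := by
          intro x q G
          refine Finset.sum_congr rfl fun m hm => ?_
          rw [dif_pos x.2, if_pos hm]
        rw [hattach, hconv (fun x q => ∑ m ∈ M x.1, Rbar x.1 q m *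
            (if hx : x.1 ∈ 𝒳 then (if m ∈ M x.1 then p (⟨x.1, hx⟩, q) m else 0) else 0))
            |>.symm]
        calc ∑ i : {x // x ∈ 𝒳} × Q, ∑ m ∈ M i.1.1, Rbar i.1.1 i.2 m *
              (if hx : i.1.1 ∈ 𝒳 then (if m ∈ M i.1.1 then p (⟨i.1.1, hx⟩, i.2) m else 0) else 0)
            = ∑ i : {x // x ∈ 𝒳} × Q, ∑ m ∈ K i, Rb i m * p i m := by
              refine Finset.sum_congr rfl fun i _ => ?_
              exact e i.1 i.2 (fun m => Rbar i.1.1 i.2 m)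
          _ ≤ R := hr
      · rw [hv, hattach, hconv (fun x q => ∑ m ∈ M x.1, Dbar x.1 q m *
            (if hx : x.1 ∈ 𝒳 then (if m ∈ M x.1 then p (⟨x.1, hx⟩, q) m else 0) else 0))
            |>.symm]
        have e : ∀ (x : {x // x ∈ 𝒳}) (q : Q) (G : List V → ℝ),
            (∑ m ∈ M x.1, G m * (if hx : x.1 ∈ 𝒳 then
              (if m ∈ M x.1 then p (⟨x.1, hx⟩, q) m else 0) else 0))
            = ∑ m ∈ K (x, q), G m * p (x, q) m := by
          intro x q G
          refine Finset.sum_congr rfl fun m hm => ?_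
          rw [dif_pos x.2, if_pos hm]
        refine Finset.sum_congr rfl fun i _ => ?_
        exact (e i.1 i.2 (fun m => Dbar i.1.1 i.2 m)).symm
  -- identify the dual sets
  have hDeq : { v : ℝ | ∃ l : ℝ, 0 ≤ l ∧
        v = -l * R + ∑ x ∈ 𝒳.attach, ∑ q : Q,
          (M x.1).inf' (hMne x.1 x.2)
            (fun m => Dbar x.1 q m + l * Rbar x.1 q m) } =
      {v : ℝ | ∃ l : ℝ, 0 ≤ l ∧
        v = -l * R + ∑ i, (K i).inf' (hK i) (fun m => D i m + l * Rb i m)} := by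
    ext v
    simp only [Set.mem_setOf_eq]
    have hsl : ∀ l : ℝ, (∑ x ∈ 𝒳.attach, ∑ q : Q, (M x.1).inf' (hMne x.1 x.2)
        (fun m => Dbar x.1 q m + l * Rbar x.1 q m))
        = ∑ i, (K i).inf' (hK i) (fun m => D i m + l * Rb i m) :=
      fun l => (hconv (fun x q => (M x.1).inf' (hMne x.1 x.2)
        (fun m => Dbar x.1 q m + l * Rbar x.1 q m))).symm
    constructor
    · rintro ⟨l, hl, rfl⟩
      exact ⟨l, hl, by rw [hsl l]⟩
    · rintro ⟨l, hl, rfl⟩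
      exact ⟨l, hl, by rw [hsl l]⟩
  rw [hPeq, hDeq]
  exact hmain
end
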